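/- arXiv:1501.00131 — 8 statements merged into one kernel-verified Lean document; each statement's English description precedes it below -/
import Mathlib

section
/- Let ω be a radial weight on the unit disc (a nonnegative integrable function depending only on |z|) and let ω̂(r) = ∫_r^1 ω(s) ds. If there exists a constant C > 0 such that ω̂(r) ≤ C ω̂((1+r)/2) for all 0 ≤ r < 1, then there exist constants C' > 0 and β > 0 such that ω̂(r) ≤ C' ((1-r)/(1-t))^β ω̂(t) for all 0 ≤ r ≤ t < 1. -/
open MeasureTheory Set

/-- If a radial weight satisfies the doubling condition
`ω̂(r) ≤ C ω̂((1+r)/2)`, then `ω̂(r) ≤ C' ((1-r)/(1-t))^β ω̂(t)` for `0 ≤ r ≤ t < 1`. -/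
theorem stmt_0 (ω : ℝ → ℝ)
    (hω_nonneg : ∀ r ∈ Set.Ico (0:ℝ) 1, 0 ≤ ω r)
    (hω_int : IntegrableOn ω (Set.Ioo (0:ℝ) 1))
    (C : ℝ) (hC : 0 < C)
    (hdoubling : ∀ r ∈ Set.Ico (0:ℝ) 1,
      (∫ s in Set.Ioo r 1, ω s) ≤ C * ∫ s in Set.Ioo ((1 + r)/2) 1, ω s) :
    ∃ C' > (0:ℝ), ∃ β > (0:ℝ), ∀ r t : ℝ, 0 ≤ r → r ≤ t → t < 1 →
      (∫ s in Set.Ioo r 1, ω s) ≤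
        C' * ((1 - r)/(1 - t)) ^ β * ∫ s in Set.Ioo t 1, ω s := by
  set C₁ : ℝ := max C 2 with hC₁def
  have hC₁2 : (2:ℝ) ≤ C₁ := le_max_right _ _
  have hC₁0 : (0:ℝ) < C₁ := by linarith
  set β : ℝ := Real.logb 2 C₁ with hβdef
  have hβ1 : (1:ℝ) ≤ β := by
    have h := Real.logb_le_logb_of_le (b := 2) (by norm_num) (by norm_num) hC₁2
    simpa [hβdef] using h
  have hβ0 : (0:ℝ) < β := by linarith
  have h2β : (2:ℝ) ^ β = C₁ := Real.rpow_logb (by norm_num) (by norm_num) hC₁0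
  -- nonnegativity of the tail integrals
  have hnn : ∀ a : ℝ, 0 ≤ a → 0 ≤ ∫ s in Set.Ioo a 1, ω s := by
    intro a ha
    apply setIntegral_nonneg measurableSet_Ioo
    intro x hx
    exact hω_nonneg x ⟨le_trans ha hx.1.le, hx.2⟩
  -- integrability of tails
  have hint : ∀ a : ℝ, 0 ≤ a → IntegrableOn ω (Set.Ioo a 1) := by
    intro a ha
    exact hω_int.mono_set (Set.Ioo_subset_Ioo ha le_rfl)
  -- monotonicity of tails
  have mono : ∀ a b : ℝ, 0 ≤ a → a ≤ b →
      (∫ s in Set.Ioo b 1, ω s) ≤ ∫ s in Set.Ioo a 1, ω s := by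
    intro a b ha hab
    apply setIntegral_mono_set (hint a ha)
    · refine (ae_restrict_iff' measurableSet_Ioo).2 (Filter.Eventually.of_forall ?_)
      intro x hx
      exact hω_nonneg x ⟨le_trans ha hx.1.le, hx.2⟩
    · exact HasSubset.Subset.eventuallyLE (Set.Ioo_subset_Ioo hab le_rfl)
  refine ⟨C₁, hC₁0, β, hβ0, ?_⟩
  intro r t hr hrt ht1
  have hr1 : r < 1 := lt_of_le_of_lt hrt ht1
  -- iteration of the doubling condition
  have iter : ∀ n : ℕ, (∫ s in Set.Ioo r 1, ω s) ≤
      C₁ ^ n * ∫ s in Set.Ioo (1 - (1 - r) / 2 ^ n) 1, ω s := by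
    intro n
    induction n with
    | zero => simp
    | succ m ih =>
      set a : ℝ := 1 - (1 - r) / 2 ^ m with hadef
      have hpow : (0:ℝ) < 2 ^ m := by positivity
      have hfrac : (1 - r) / 2 ^ m ≤ 1 - r := by
        apply div_le_self (by linarith)
        exact one_le_pow₀ (by norm_num)
      have ha0 : 0 ≤ a := by rw [hadef]; linarith
      have ha1 : a < 1 := by
        rw [hadef]
        have : 0 < (1 - r) / 2 ^ m := div_pos (by linarith) hpow
        linarith
      have hd := hdoubling a ⟨ha0, ha1⟩
      have hmid : (1 + a) / 2 = 1 - (1 - r) / 2 ^ (m + 1) := by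
        rw [hadef]; field_simp; ring
      have hd' : (∫ s in Set.Ioo a 1, ω s) ≤
          C₁ * ∫ s in Set.Ioo (1 - (1 - r) / 2 ^ (m + 1)) 1, ω s := by
        rw [← hmid]
        refine le_trans hd ?_
        have hmid0 : (0:ℝ) ≤ (1 + a) / 2 := by linarith
        exact mul_le_mul_of_nonneg_right (le_max_left _ _) (hnn _ hmid0)
      calc (∫ s in Set.Ioo r 1, ω s) ≤ C₁ ^ m * ∫ s in Set.Ioo a 1, ω s := ih
        _ ≤ C₁ ^ m * (C₁ * ∫ s in Set.Ioo (1 - (1 - r) / 2 ^ (m + 1)) 1, ω s) :=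
            mul_le_mul_of_nonneg_left hd' (pow_nonneg hC₁0.le m)
        _ = C₁ ^ (m + 1) * ∫ s in Set.Ioo (1 - (1 - r) / 2 ^ (m + 1)) 1, ω s := by ring
  -- choose n minimal with Q < 2^n
  set Q : ℝ := (1 - r) / (1 - t) with hQdef
  have ht0 : (0:ℝ) < 1 - t := by linarith
  have hQ1 : (1:ℝ) ≤ Q := by
    rw [hQdef, le_div_iff₀ ht0]; linarith
  obtain ⟨n₀, hn₀⟩ := pow_unbounded_of_one_lt Q (by norm_num : (1:ℝ) < 2)
  set P : ℕ → Prop := fun n => Q < 2 ^ n with hPdef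
  have hP : ∃ n, P n := ⟨n₀, hn₀⟩
  set n : ℕ := Nat.find hP with hndef
  have hQn : Q < 2 ^ n := Nat.find_spec hP
  -- the point after n doublings lies beyond t
  have hstep : t ≤ 1 - (1 - r) / 2 ^ n := by
    have hpow : (0:ℝ) < 2 ^ n := by positivity
    have : (1 - r) / 2 ^ n ≤ 1 - t := by
      rw [div_le_iff₀ hpow]
      have := (div_lt_iff₀ ht0).1 hQn
      nlinarith
    linarith
  have key : C₁ ^ n ≤ C₁ * Q ^ β := by
    have hQ0 : (0:ℝ) < Q := by linarith
    have hQβ1 : (1:ℝ) ≤ Q ^ β := Real.one_le_rpow hQ1 hβ0.le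
    match n, hQn, hndef with
    | 0, _, _ => simpa using le_trans (by linarith : (1:ℝ) ≤ C₁) (le_mul_of_one_le_right hC₁0.le hQβ1)
    | (m+1), hQn, hndef =>
      have hmin : ¬ P m := Nat.find_min hP (by omega : m < Nat.find hP)
      have hm : (2:ℝ) ^ m ≤ Q := not_lt.1 hmin
      have h1 : (C₁:ℝ) ^ (m+1) = ((2:ℝ) ^ (m+1)) ^ β := by
        rw [← h2β, ← Real.rpow_natCast ((2:ℝ) ^ β) (m+1), ← Real.rpow_mul (by norm_num),
          mul_comm, Real.rpow_mul (by norm_num), Real.rpow_natCast]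
      have h2 : ((2:ℝ) ^ (m+1)) ^ β ≤ (2 * Q) ^ β := by
        apply Real.rpow_le_rpow (by positivity) _ hβ0.le
        rw [pow_succ, mul_comm]
        nlinarith
      have h3 : ((2:ℝ) * Q) ^ β = C₁ * Q ^ β := by
        rw [Real.mul_rpow (by norm_num) hQ0.le, h2β]
      rw [h1]; rw [h3] at h2; exact h2
  calc (∫ s in Set.Ioo r 1, ω s)
      ≤ C₁ ^ n * ∫ s in Set.Ioo (1 - (1 - r) / 2 ^ n) 1, ω s := iter n
    _ ≤ C₁ ^ n * ∫ s in Set.Ioo t 1, ω s :=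
        mul_le_mul_of_nonneg_left (mono t _ (le_trans hr hrt) hstep) (by positivity)
    _ ≤ (C₁ * Q ^ β) * ∫ s in Set.Ioo t 1, ω s :=
        mul_le_mul_of_nonneg_right key (hnn t (le_trans hr hrt))
    _ = C₁ * Q ^ β * ∫ s in Set.Ioo t 1, ω s := by ring
end

section
/- Let ω be a radial weight satisfying the doubling condition ω̂(r) ≤ C ω̂((1+r)/2) for all 0 ≤ r < 1. Then there exist constants C' > 0 and γ > 0 such that ∫_0^t ((1-t)/(1-s))^γ ω(s) ds ≤ C' ω̂(t) for all 0 ≤ t < 1. -/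
open MeasureTheory Set

/-- For a radial weight satisfying the doubling condition, there exist
`C' > 0` and `γ > 0` such that `∫_0^t ((1-t)/(1-s))^γ ω(s) ds ≤ C' ω̂(t)` for `0 ≤ t < 1`. -/
theorem stmt_2 (ω : ℝ → ℝ)
    (hω_nonneg : ∀ r ∈ Set.Ico (0:ℝ) 1, 0 ≤ ω r)
    (hω_int : IntegrableOn ω (Set.Ioo (0:ℝ) 1))
    (C : ℝ) (hC : 0 < C)
    (hdoubling : ∀ r ∈ Set.Ico (0:ℝ) 1,
      (∫ s in Set.Ioo r 1, ω s) ≤ C * ∫ s in Set.Ioo ((1 + r)/2) 1, ω s) :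
    ∃ C' > (0:ℝ), ∃ γ > (0:ℝ), ∀ t ∈ Set.Ico (0:ℝ) 1,
      (∫ s in Set.Ioo (0:ℝ) t, ((1 - t)/(1 - s)) ^ γ * ω s) ≤
        C' * ∫ s in Set.Ioo t 1, ω s := by
  obtain ⟨N, hN⟩ := pow_unbounded_of_one_lt (2 * C) (one_lt_two (α := ℝ))
  set γ : ℝ := (N : ℝ) + 1 with hγdef
  have hγ : (0:ℝ) < γ := by positivity
  have h2γ : 2 * C ≤ (2:ℝ) ^ γ := by
    have h1 : ((2:ℝ) ^ N : ℝ) ≤ (2:ℝ) ^ γ := by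
      rw [← Real.rpow_natCast 2 N]
      exact Real.rpow_le_rpow_of_exponent_le one_le_two (by linarith)
    linarith
  -- nonnegativity of the tail integral
  have hωhat_nonneg : ∀ x : ℝ, 0 ≤ x → 0 ≤ ∫ s in Ioo x 1, ω s := by
    intro x hx
    refine setIntegral_nonneg measurableSet_Ioo fun s hs => ?_
    exact hω_nonneg s ⟨hx.trans hs.1.le, hs.2⟩
  -- a.e. nonnegativity on restricted measures
  have hω_ae : ∀ a : ℝ, 0 ≤ a → 0 ≤ᵐ[volume.restrict (Ioo a (1:ℝ))] ω := by
    intro a ha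
    filter_upwards [ae_restrict_mem measurableSet_Ioo] with s hs
    exact hω_nonneg s ⟨ha.trans hs.1.le, hs.2⟩
  -- monotonicity of the tail integral
  have hmono : ∀ a b : ℝ, 0 ≤ a → a ≤ b →
      (∫ s in Ioo b 1, ω s) ≤ ∫ s in Ioo a 1, ω s := by
    intro a b ha hab
    refine setIntegral_mono_set (hω_int.mono_set (Ioo_subset_Ioo ha le_rfl)) (hω_ae a ha) ?_
    exact HasSubset.Subset.eventuallyLE (Ioo_subset_Ioo hab le_rfl)
  -- integrability of the integrand
  have hg_int : ∀ t : ℝ, t < 1 → IntegrableOn (fun s => (1 - s) ^ (-γ) * ω s) (Ioo 0 t) := by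
    intro t ht
    have hω' : IntegrableOn ω (Ioo 0 t) := hω_int.mono_set (Ioo_subset_Ioo le_rfl ht.le)
    refine Integrable.bdd_mul (c := (1 - t) ^ (-γ)) hω' ?_ ?_
    · refine ContinuousOn.aestronglyMeasurable ?_ measurableSet_Ioo
      refine ContinuousOn.rpow_const ((continuous_const.sub continuous_id).continuousOn) ?_
      intro x hx
      exact Or.inl (by simp; intro h; nlinarith [hx.2])
    · rw [ae_restrict_iff' measurableSet_Ioo]
      refine ae_of_all _ fun s hs => ?_
      have h1s : (0:ℝ) < 1 - t := by linarith
      rw [Real.norm_eq_abs, abs_of_nonneg (Real.rpow_nonneg (by linarith [hs.2]) _)]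
      exact Real.rpow_le_rpow_of_nonpos h1s (by linarith [hs.2]) (by linarith)
  -- direct bound for t ≤ 1/2
  have direct : ∀ t : ℝ, 0 ≤ t → t ≤ 1/2 →
      (∫ s in Ioo (0:ℝ) t, (1 - s) ^ (-γ) * ω s) ≤
        2 * C * (1 - t) ^ (-γ) * ∫ s in Ioo t 1, ω s := by
    intro t ht0 ht2
    have ht1 : t < 1 := by linarith
    have h1t : (0:ℝ) < 1 - t := by linarith
    have hωt : IntegrableOn ω (Ioo 0 t) := hω_int.mono_set (Ioo_subset_Ioo le_rfl ht1.le)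
    have step1 : (∫ s in Ioo (0:ℝ) t, (1 - s) ^ (-γ) * ω s) ≤
        ∫ s in Ioo (0:ℝ) t, (1 - t) ^ (-γ) * ω s := by
      refine setIntegral_mono_on (hg_int t ht1) (hωt.const_mul _) measurableSet_Ioo ?_
      intro s hs
      refine mul_le_mul_of_nonneg_right ?_ (hω_nonneg s ⟨hs.1.le, hs.2.trans ht1⟩)
      exact Real.rpow_le_rpow_of_nonpos h1t (by linarith [hs.2]) (by linarith)
    have step2 : (∫ s in Ioo (0:ℝ) t, (1 - t) ^ (-γ) * ω s) =
        (1 - t) ^ (-γ) * ∫ s in Ioo (0:ℝ) t, ω s := integral_const_mul _ _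
    have step3 : (∫ s in Ioo (0:ℝ) t, ω s) ≤ ∫ s in Ioo (0:ℝ) 1, ω s := by
      refine setIntegral_mono_set hω_int (hω_ae 0 le_rfl) ?_
      exact HasSubset.Subset.eventuallyLE (Ioo_subset_Ioo le_rfl ht1.le)
    have step4 : (∫ s in Ioo (0:ℝ) 1, ω s) ≤ C * ∫ s in Ioo (1/2 : ℝ) 1, ω s := by
      have := hdoubling 0 ⟨le_rfl, by norm_num⟩
      norm_num at this ⊢
      exact this
    have step5 : (∫ s in Ioo (1/2 : ℝ) 1, ω s) ≤ ∫ s in Ioo t 1, ω s :=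
      hmono t (1/2) ht0 ht2
    have hpow : (0:ℝ) ≤ (1 - t) ^ (-γ) := Real.rpow_nonneg h1t.le _
    have hT : (0:ℝ) ≤ ∫ s in Ioo t 1, ω s := hωhat_nonneg t ht0
    calc (∫ s in Ioo (0:ℝ) t, (1 - s) ^ (-γ) * ω s)
        ≤ (1 - t) ^ (-γ) * ∫ s in Ioo (0:ℝ) t, ω s := step1.trans_eq step2
      _ ≤ (1 - t) ^ (-γ) * (C * ∫ s in Ioo t 1, ω s) := by
          refine mul_le_mul_of_nonneg_left ?_ hpow
          calc (∫ s in Ioo (0:ℝ) t, ω s) ≤ ∫ s in Ioo (0:ℝ) 1, ω s := step3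
            _ ≤ C * ∫ s in Ioo (1/2 : ℝ) 1, ω s := step4
            _ ≤ C * ∫ s in Ioo t 1, ω s := mul_le_mul_of_nonneg_left step5 hC.le
      _ ≤ 2 * C * (1 - t) ^ (-γ) * ∫ s in Ioo t 1, ω s := by nlinarith [mul_nonneg (mul_nonneg hC.le hpow) hT]
  -- the key induction
  have key : ∀ n : ℕ, ∀ t : ℝ, 0 ≤ t → t < 1 → 1 ≤ 2 ^ n * (1 - t) →
      (∫ s in Ioo (0:ℝ) t, (1 - s) ^ (-γ) * ω s) ≤
        2 * C * (1 - t) ^ (-γ) * ∫ s in Ioo t 1, ω s := by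
    intro n
    induction n with
    | zero =>
      intro t ht0 ht1 hle
      have : t ≤ 1/2 := by norm_num at hle; linarith
      exact direct t ht0 this
    | succ n ih =>
      intro t ht0 ht1 hle
      by_cases hhalf : t ≤ 1/2
      · exact direct t ht0 hhalf
      push_neg at hhalf
      set m : ℝ := 2 * t - 1 with hm
      have hm0 : 0 ≤ m := by simp [hm]; linarith
      have hmt : m < t := by simp [hm]; linarith
      have hm1 : m < 1 := by simp [hm]; linarith
      have h1t : (0:ℝ) < 1 - t := by linarith
      have h1m : (0:ℝ) < 1 - m := by linarith
      have hmid : (1 + m) / 2 = t := by rw [hm]; ring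
      have hle' : 1 ≤ 2 ^ n * (1 - m) := by
        have : (2:ℝ) ^ (n + 1) = 2 * 2 ^ n := by ring
        have h2 : (1:ℝ) ≤ 2 ^ n * (2 * (1 - t)) := by
          calc (1:ℝ) ≤ 2 ^ (n+1) * (1 - t) := hle
            _ = 2 ^ n * (2 * (1 - t)) := by ring
        have : 1 - m = 2 * (1 - t) := by rw [hm]; ring
        rw [this]; exact h2
      -- split the integral
      have hsplit : Ioc (0:ℝ) m ∪ Ioo m t = Ioo 0 t := Ioc_union_Ioo_eq_Ioo hm0 hmt
      have hdisj : Disjoint (Ioc (0:ℝ) m) (Ioo m t) := by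
        refine Set.disjoint_left.mpr fun x hx hx' => ?_
        exact absurd hx.2 (not_le.mpr hx'.1)
      have hint1 : IntegrableOn (fun s => (1 - s) ^ (-γ) * ω s) (Ioc (0:ℝ) m) := by
        refine ((hg_int t ht1).mono_set ?_)
        rw [← hsplit]; exact subset_union_left
      have hint2 : IntegrableOn (fun s => (1 - s) ^ (-γ) * ω s) (Ioo m t) := by
        refine ((hg_int t ht1).mono_set ?_)
        rw [← hsplit]; exact subset_union_right
      have hsum : (∫ s in Ioo (0:ℝ) t, (1 - s) ^ (-γ) * ω s) =
          (∫ s in Ioo (0:ℝ) m, (1 - s) ^ (-γ) * ω s) +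
            ∫ s in Ioo m t, (1 - s) ^ (-γ) * ω s := by
        rw [← hsplit, setIntegral_union hdisj measurableSet_Ioo hint1 hint2,
          integral_Ioc_eq_integral_Ioo]
      -- bound the first piece using the induction hypothesis
      have hdoub : (∫ s in Ioo m 1, ω s) ≤ C * ∫ s in Ioo t 1, ω s := by
        have := hdoubling m ⟨hm0, hm1⟩
        rwa [hmid] at this
      have hT : (0:ℝ) ≤ ∫ s in Ioo t 1, ω s := hωhat_nonneg t ht0
      have hM : (0:ℝ) ≤ ∫ s in Ioo m 1, ω s := hωhat_nonneg m hm0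
      have hpowm : (1 - m) ^ (-γ) = (2:ℝ) ^ (-γ) * (1 - t) ^ (-γ) := by
        have : 1 - m = 2 * (1 - t) := by rw [hm]; ring
        rw [this, Real.mul_rpow (by norm_num) h1t.le]
      have h2γpos : (0:ℝ) < (2:ℝ) ^ γ := Real.rpow_pos_of_pos (by norm_num) _
      have h2negγ : (2:ℝ) ^ (-γ) = ((2:ℝ) ^ γ)⁻¹ := Real.rpow_neg (by norm_num) _
      have hfac : 2 * C * (2:ℝ) ^ (-γ) ≤ 1 := by
        rw [h2negγ, ← div_eq_mul_inv, div_le_one h2γpos]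
        exact h2γ
      have hpowt : (0:ℝ) ≤ (1 - t) ^ (-γ) := Real.rpow_nonneg h1t.le _
      have piece1 : (∫ s in Ioo (0:ℝ) m, (1 - s) ^ (-γ) * ω s) ≤
          C * (1 - t) ^ (-γ) * ∫ s in Ioo t 1, ω s := by
        calc (∫ s in Ioo (0:ℝ) m, (1 - s) ^ (-γ) * ω s)
            ≤ 2 * C * (1 - m) ^ (-γ) * ∫ s in Ioo m 1, ω s := ih m hm0 hm1 hle'
          _ ≤ 2 * C * (1 - m) ^ (-γ) * (C * ∫ s in Ioo t 1, ω s) := by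
              refine mul_le_mul_of_nonneg_left hdoub ?_
              have : (0:ℝ) ≤ (1 - m) ^ (-γ) := Real.rpow_nonneg h1m.le _
              nlinarith
          _ = (2 * C * (2:ℝ) ^ (-γ)) * (C * (1 - t) ^ (-γ) * ∫ s in Ioo t 1, ω s) := by
              rw [hpowm]; ring
          _ ≤ 1 * (C * (1 - t) ^ (-γ) * ∫ s in Ioo t 1, ω s) := by
              refine mul_le_mul_of_nonneg_right hfac ?_
              have := mul_nonneg (mul_nonneg hC.le hpowt) hT
              linarith
          _ = C * (1 - t) ^ (-γ) * ∫ s in Ioo t 1, ω s := one_mul _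
      -- bound the second piece
      have piece2 : (∫ s in Ioo m t, (1 - s) ^ (-γ) * ω s) ≤
          C * (1 - t) ^ (-γ) * ∫ s in Ioo t 1, ω s := by
        have hωmt : IntegrableOn ω (Ioo m t) :=
          hω_int.mono_set (Ioo_subset_Ioo hm0 ht1.le)
        have b1 : (∫ s in Ioo m t, (1 - s) ^ (-γ) * ω s) ≤
            ∫ s in Ioo m t, (1 - t) ^ (-γ) * ω s := by
          refine setIntegral_mono_on hint2 (hωmt.const_mul _) measurableSet_Ioo ?_
          intro s hs
          refine mul_le_mul_of_nonneg_right ?_ (hω_nonneg s ⟨hm0.trans hs.1.le, hs.2.trans ht1⟩)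
          exact Real.rpow_le_rpow_of_nonpos h1t (by linarith [hs.2]) (by linarith)
        have b2 : (∫ s in Ioo m t, (1 - t) ^ (-γ) * ω s) =
            (1 - t) ^ (-γ) * ∫ s in Ioo m t, ω s := integral_const_mul _ _
        have b3 : (∫ s in Ioo m t, ω s) ≤ ∫ s in Ioo m 1, ω s := by
          refine setIntegral_mono_set (hω_int.mono_set (Ioo_subset_Ioo hm0 le_rfl))
            (hω_ae m hm0) ?_
          exact HasSubset.Subset.eventuallyLE (Ioo_subset_Ioo le_rfl ht1.le)
        calc (∫ s in Ioo m t, (1 - s) ^ (-γ) * ω s)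
            ≤ (1 - t) ^ (-γ) * ∫ s in Ioo m t, ω s := b1.trans_eq b2
          _ ≤ (1 - t) ^ (-γ) * (C * ∫ s in Ioo t 1, ω s) := by
              refine mul_le_mul_of_nonneg_left (b3.trans hdoub) hpowt
          _ = C * (1 - t) ^ (-γ) * ∫ s in Ioo t 1, ω s := by ring
      rw [hsum]
      calc (∫ s in Ioo (0:ℝ) m, (1 - s) ^ (-γ) * ω s) +
            ∫ s in Ioo m t, (1 - s) ^ (-γ) * ω s
          ≤ C * (1 - t) ^ (-γ) * (∫ s in Ioo t 1, ω s) +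
            C * (1 - t) ^ (-γ) * ∫ s in Ioo t 1, ω s := add_le_add piece1 piece2
        _ = 2 * C * (1 - t) ^ (-γ) * ∫ s in Ioo t 1, ω s := by ring
  -- conclude
  refine ⟨2 * C, by linarith, γ, hγ, fun t ht => ?_⟩
  obtain ⟨ht0, ht1⟩ := ht
  have h1t : (0:ℝ) < 1 - t := by linarith
  obtain ⟨n, hn⟩ := pow_unbounded_of_one_lt ((1 - t)⁻¹) (one_lt_two (α := ℝ))
  have hle : 1 ≤ 2 ^ n * (1 - t) := by
    rw [inv_lt_iff_one_lt_mul₀ h1t] at hn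
    linarith [mul_comm ((2:ℝ)^n) (1-t)]
  have hcongr : ∀ s ∈ Ioo (0:ℝ) t, ((1 - t)/(1 - s)) ^ γ * ω s =
      (1 - t) ^ γ * ((1 - s) ^ (-γ) * ω s) := by
    intro s hs
    have h1s : (0:ℝ) ≤ 1 - s := by linarith [hs.2]
    rw [Real.div_rpow h1t.le h1s, Real.rpow_neg h1s]
    ring
  rw [setIntegral_congr_fun measurableSet_Ioo hcongr, integral_const_mul]
  have hkey := key n t ht0 ht1 hle
  have hpow : (0:ℝ) ≤ (1 - t) ^ γ := Real.rpow_nonneg h1t.le _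
  have hone : (1 - t) ^ γ * (1 - t) ^ (-γ) = 1 := by
    rw [← Real.rpow_add h1t]; simp
  calc (1 - t) ^ γ * ∫ s in Ioo (0:ℝ) t, (1 - s) ^ (-γ) * ω s
      ≤ (1 - t) ^ γ * (2 * C * (1 - t) ^ (-γ) * ∫ s in Ioo t 1, ω s) :=
        mul_le_mul_of_nonneg_left hkey hpow
    _ = ((1 - t) ^ γ * (1 - t) ^ (-γ)) * (2 * C * ∫ s in Ioo t 1, ω s) := by ring
    _ = 2 * C * ∫ s in Ioo t 1, ω s := by rw [hone, one_mul]
end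

section
/- Let ω be a radial weight in the class D̂ (i.e. ω̂(r) ≤ C ω̂((1+r)/2) for all 0 ≤ r < 1). Then there exist positive constants c₁, c₂ such that c₁ ω̂(1 - 1/x) ≤ ∫_0^1 s^x ω(s) ds ≤ c₂ ω̂(1 - 1/x) for all x ∈ [1, ∞). -/
/-!
On `(1 - 1/(2x), 1)` Bernoulli's inequality gives `s ^ x ≥ 1/2`, and one doubling step compares
`ω̂(1 - 1/(2x))` with `ω̂(1 - 1/x)`; this is the lower bound. For the upper bound, cut `(0, 1)` at
the points `1 - 2^k/x`: on the `k`-th layer `s ^ x ≤ e^{-2^k}`, while `k + 1` doubling steps bound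
the mass of `ω` there by `C^{k+1} ω̂(1 - 1/x)`. The doubly exponential decay beats the geometric
growth, so the layers add up to a constant multiple of `ω̂(1 - 1/x)`.
-/

open MeasureTheory Set Filter Real

/-- `ω̂(r)`. -/
noncomputable def weightTail (ω : ℝ → ℝ) (r : ℝ) : ℝ := ∫ s in Ioo r 1, ω s

noncomputable def weightMoment (ω : ℝ → ℝ) (x : ℝ) : ℝ := ∫ s in Ioo 0 1, s ^ x * ω s

/-- Membership of `ω` in `D̂`, with the constant `C`. -/
def TailDoubling (ω : ℝ → ℝ) (C : ℝ) : Prop :=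
  ∀ r ∈ Ico (0 : ℝ) 1, weightTail ω r ≤ C * weightTail ω ((1 + r) / 2)

theorem Real.rpow_le_exp_neg {s x u : ℝ} (hs : 0 ≤ s) (hx : 0 < x) (h : s ≤ 1 - u / x) :
    s ^ x ≤ exp (-u) := by
  calc s ^ x ≤ exp (-(u / x)) ^ x := by gcongr; linarith [add_one_le_exp (-(u / x))]
    _ = exp (-u) := by rw [← exp_mul, neg_mul, div_mul_cancel₀ _ hx.ne']

theorem Real.half_le_rpow_of_one_sub_le {s x : ℝ} (hx : 1 ≤ x) (h : 1 - 1 / (2 * x) ≤ s) :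
    1 / 2 ≤ s ^ x := by
  have hx0 : 0 < x := zero_lt_one.trans_le hx
  have hxs : -(1 / 2) ≤ x * (s - 1) := by
    have : x * (1 / (2 * x)) = 1 / 2 := by field_simp
    nlinarith
  have hs : -1 ≤ s - 1 := by nlinarith
  have := one_add_mul_self_le_rpow_one_add hs hx
  rw [add_sub_cancel] at this
  linarith

theorem summable_pow_mul_exp_neg_two_pow {c : ℝ} (hc : 0 < c) :
    Summable fun k : ℕ => c ^ k * exp (-2 ^ k) := by
  refine summable_of_ratio_test_tendsto_lt_one zero_lt_one
    (Eventually.of_forall fun k => by positivity) ?_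
  have hratio : ∀ k : ℕ,
      ‖c ^ (k + 1) * exp (-2 ^ (k + 1))‖ / ‖c ^ k * exp (-2 ^ k)‖ = c * exp (-2 ^ k) := by
    intro k
    rw [Real.norm_of_nonneg (by positivity), Real.norm_of_nonneg (by positivity), pow_succ,
      pow_succ, show -((2 : ℝ) ^ k * 2) = -2 ^ k + -2 ^ k by ring, exp_add]
    field_simp
  simp_rw [hratio]
  simpa using ((tendsto_exp_atBot.comp (tendsto_neg_atTop_atBot.comp
    (tendsto_pow_atTop_atTop_of_one_lt one_lt_two))).const_mul c)

theorem intervalIntegral.integral_eq_add_sum_integral {f : ℝ → ℝ} {r : ℕ → ℝ} {a b : ℝ} {N : ℕ}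
    (hN : r N = a) (hf : ∀ k < N, IntervalIntegrable f volume (r k) (r (k + 1)))
    (hb : IntervalIntegrable f volume (r 0) b) :
    ∫ s in a..b, f s = (∫ s in r 0..b, f s) + ∑ k ∈ Finset.range N, ∫ s in r (k + 1)..r k, f s := by
  have hsum : ∑ k ∈ Finset.range N, ∫ s in r (k + 1)..r k, f s = ∫ s in r N..r 0, f s := by
    rw [integral_symm (r 0) (r N), ← sum_integral_adjacent_intervals hf, ← Finset.sum_neg_distrib]
    exact Finset.sum_congr rfl fun k _ => integral_symm _ _
  rw [hsum, ← hN]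
  exact (integral_add_adjacent_intervals (IntervalIntegrable.trans_iterate hf).symm hb).symm.trans
    (add_comm _ _)

theorem one_sub_one_div_nonneg {x : ℝ} (hx : 1 ≤ x) : 0 ≤ 1 - 1 / x :=
  sub_nonneg.2 ((div_le_one (zero_lt_one.trans_le hx)).2 hx)

noncomputable def dyadicPoint (x : ℝ) (k : ℕ) : ℝ := max (1 - 2 ^ k / x) 0

theorem dyadicPoint_mem_Ico {x : ℝ} (hx : 0 < x) (k : ℕ) : dyadicPoint x k ∈ Ico (0 : ℝ) 1 :=
  ⟨le_max_right _ _, max_lt (by linarith [show 0 < (2 : ℝ) ^ k / x by positivity]) one_pos⟩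

theorem dyadicPoint_zero {x : ℝ} (hx : 1 ≤ x) : dyadicPoint x 0 = 1 - 1 / x := by
  simpa [dyadicPoint] using one_sub_one_div_nonneg hx

theorem dyadicPoint_eq_zero {x : ℝ} (hx : 0 < x) {N : ℕ} (hN : x ≤ 2 ^ N) :
    dyadicPoint x N = 0 :=
  max_eq_right (by rw [sub_nonpos, one_le_div hx]; exact hN)

section Weight

variable {ω : ℝ → ℝ} {C : ℝ}

theorem weightTail_nonneg (hω : ∀ r ∈ Ico (0 : ℝ) 1, 0 ≤ ω r) {r : ℝ} (hr : 0 ≤ r) :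
    0 ≤ weightTail ω r :=
  setIntegral_nonneg measurableSet_Ioo fun s hs => hω s ⟨hr.trans hs.1.le, hs.2⟩

theorem weightTail_le_weightTail (hω : ∀ r ∈ Ico (0 : ℝ) 1, 0 ≤ ω r)
    (hint : IntegrableOn ω (Ioo 0 1)) {a b : ℝ} (ha : 0 ≤ a) (hab : a ≤ b) :
    weightTail ω b ≤ weightTail ω a :=
  setIntegral_mono_set (hint.mono_set (Ioo_subset_Ioo_left ha))
    (ae_restrict_of_forall_mem measurableSet_Ioo
      fun s hs => hω s ⟨ha.trans hs.1.le, hs.2⟩)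
    (Ioo_subset_Ioo_left hab).eventuallyLE

theorem TailDoubling.weightTail_le_pow_mul (hD : TailDoubling ω C)
    (hω : ∀ r ∈ Ico (0 : ℝ) 1, 0 ≤ ω r) (hint : IntegrableOn ω (Ioo 0 1)) (hC : 0 ≤ C)
    (n : ℕ) {r r' : ℝ} (hr : r ∈ Ico 0 1) (hr' : 0 ≤ r') (h : 1 - r ≤ 2 ^ n * (1 - r')) :
    weightTail ω r ≤ C ^ n * weightTail ω r' := by
  induction n generalizing r with
  | zero =>
    rw [pow_zero, one_mul]
    exact weightTail_le_weightTail hω hint hr' (by linarith [pow_zero (2 : ℝ)])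
  | succ n ih =>
    have hmid : (1 + r) / 2 ∈ Ico (0 : ℝ) 1 := ⟨by linarith [hr.1], by linarith [hr.2]⟩
    calc weightTail ω r ≤ C * weightTail ω ((1 + r) / 2) := hD r hr
      _ ≤ C * (C ^ n * weightTail ω r') := by
          gcongr
          exact ih hmid (by rw [pow_succ] at h; linarith)
      _ = C ^ (n + 1) * weightTail ω r' := by ring

theorem integral_mul_le_mul_weightTail (hω : ∀ r ∈ Ico (0 : ℝ) 1, 0 ≤ ω r)
    (hint : IntegrableOn ω (Ioo 0 1)) {f : ℝ → ℝ} (hf : IntegrableOn (fun s => f s * ω s) (Ioo 0 1))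
    {a b M : ℝ} (ha : 0 ≤ a) (hab : a ≤ b) (hb : b ≤ 1) (hM : 0 ≤ M)
    (hfM : ∀ s ∈ Ioo a b, f s ≤ M) :
    ∫ s in a..b, f s * ω s ≤ M * weightTail ω a := by
  have hsub : Ioo a b ⊆ Ioo 0 1 := Ioo_subset_Ioo ha hb
  rw [intervalIntegral.integral_of_le hab, integral_Ioc_eq_integral_Ioo]
  calc ∫ s in Ioo a b, f s * ω s ≤ ∫ s in Ioo a b, M * ω s :=
        setIntegral_mono_on (hf.mono_set hsub) ((hint.mono_set hsub).const_mul M) measurableSet_Ioo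
          fun s hs => mul_le_mul_of_nonneg_right (hfM s hs) (hω s ⟨(hsub hs).1.le, (hsub hs).2⟩)
    _ = M * ∫ s in Ioo a b, ω s := integral_const_mul M _
    _ ≤ M * weightTail ω a := by
        gcongr
        exact setIntegral_mono_set (hint.mono_set (Ioo_subset_Ioo_left ha))
          (ae_restrict_of_forall_mem measurableSet_Ioo
            fun s hs => hω s ⟨ha.trans hs.1.le, hs.2⟩)
          (Ioo_subset_Ioo_right hb).eventuallyLE

theorem integrableOn_rpow_mul (hint : IntegrableOn ω (Ioo 0 1)) {x : ℝ} (hx : 0 ≤ x) :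
    IntegrableOn (fun s => s ^ x * ω s) (Ioo 0 1) :=
  (((integrableOn_Icc_iff_integrableOn_Ioo (f := ω) (μ := volume)).2 hint).continuousOn_mul
    (continuous_rpow_const hx).continuousOn isCompact_Icc).mono_set Ioo_subset_Icc_self

theorem TailDoubling.weightTail_le_two_mul_weightMoment (hD : TailDoubling ω C)
    (hω : ∀ r ∈ Ico (0 : ℝ) 1, 0 ≤ ω r) (hint : IntegrableOn ω (Ioo 0 1)) (hC : 0 ≤ C)
    {x : ℝ} (hx : 1 ≤ x) :
    weightTail ω (1 - 1 / x) ≤ 2 * C * weightMoment ω x := by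
  have hx0 : 0 < x := zero_lt_one.trans_le hx
  set a := 1 - 1 / (2 * x) with ha_def
  have ha : 0 ≤ a := by
    rw [ha_def, sub_nonneg, div_le_one (by positivity)]
    linarith
  have hdoub : weightTail ω (1 - 1 / x) ≤ C * weightTail ω a := by
    have h := hD (1 - 1 / x) ⟨one_sub_one_div_nonneg hx, by linarith [one_div_pos.2 hx0]⟩
    rwa [show (1 + (1 - 1 / x)) / 2 = a by rw [ha_def]; field_simp; ring] at h
  have hhalf : weightTail ω a ≤ 2 * ∫ s in Ioo a 1, s ^ x * ω s := by
    have hωa : IntegrableOn ω (Ioo a 1) := hint.mono_set (Ioo_subset_Ioo_left ha)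
    calc weightTail ω a = 2 * ∫ s in Ioo a 1, 1 / 2 * ω s := by
          rw [integral_const_mul, weightTail]; ring
      _ ≤ 2 * ∫ s in Ioo a 1, s ^ x * ω s := by
          refine mul_le_mul_of_nonneg_left (setIntegral_mono_on (hωa.const_mul _)
            ((integrableOn_rpow_mul hint hx0.le).mono_set (Ioo_subset_Ioo_left ha))
            measurableSet_Ioo fun s hs => mul_le_mul_of_nonneg_right
              (half_le_rpow_of_one_sub_le hx hs.1.le) (hω s ⟨ha.trans hs.1.le, hs.2⟩)) zero_le_two
  have hsub : ∫ s in Ioo a 1, s ^ x * ω s ≤ weightMoment ω x :=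
    setIntegral_mono_set (integrableOn_rpow_mul hint hx0.le)
      (ae_restrict_of_forall_mem measurableSet_Ioo fun s hs =>
        mul_nonneg (rpow_nonneg hs.1.le x) (hω s ⟨hs.1.le, hs.2⟩))
      (Ioo_subset_Ioo_left ha).eventuallyLE
  calc weightTail ω (1 - 1 / x) ≤ C * (2 * weightMoment ω x) := by
        refine hdoub.trans ?_
        gcongr
        exact hhalf.trans (by gcongr)
    _ = 2 * C * weightMoment ω x := by ring

theorem TailDoubling.integral_dyadic_layer_le (hD : TailDoubling ω C)
    (hω : ∀ r ∈ Ico (0 : ℝ) 1, 0 ≤ ω r) (hint : IntegrableOn ω (Ioo 0 1)) (hC : 0 ≤ C)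
    {x : ℝ} (hx : 1 ≤ x) (k : ℕ) :
    ∫ s in dyadicPoint x (k + 1)..dyadicPoint x k, s ^ x * ω s ≤
      exp (-2 ^ k) * (C ^ (k + 1) * weightTail ω (1 - 1 / x)) := by
  have hx0 : 0 < x := zero_lt_one.trans_le hx
  have hmono : dyadicPoint x (k + 1) ≤ dyadicPoint x k := by
    unfold dyadicPoint
    gcongr <;> norm_num
  refine (integral_mul_le_mul_weightTail hω hint (integrableOn_rpow_mul hint hx0.le)
    (dyadicPoint_mem_Ico hx0 _).1 hmono (dyadicPoint_mem_Ico hx0 k).2.le (exp_pos (-2 ^ k)).le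
      fun s hs => ?_).trans ?_
  · have hs0 : 0 < s := (dyadicPoint_mem_Ico hx0 _).1.trans_lt hs.1
    exact rpow_le_exp_neg hs0.le hx0 ((le_max_iff.1 hs.2.le).resolve_right (not_le.2 hs0))
  · gcongr
    refine hD.weightTail_le_pow_mul hω hint hC (k + 1) (dyadicPoint_mem_Ico hx0 _)
      (one_sub_one_div_nonneg hx) ?_
    have : 1 - 2 ^ (k + 1) / x ≤ dyadicPoint x (k + 1) := le_max_left _ _
    rw [sub_sub_cancel, mul_one_div]
    linarith

theorem TailDoubling.weightMoment_le (hD : TailDoubling ω C)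
    (hω : ∀ r ∈ Ico (0 : ℝ) 1, 0 ≤ ω r) (hint : IntegrableOn ω (Ioo 0 1)) (hC : 0 < C)
    {x : ℝ} (hx : 1 ≤ x) :
    weightMoment ω x ≤ (1 + C * ∑' k : ℕ, C ^ k * exp (-2 ^ k)) * weightTail ω (1 - 1 / x) := by
  have hx0 : 0 < x := zero_lt_one.trans_le hx
  set T := weightTail ω (1 - 1 / x)
  obtain ⟨N, hN⟩ := pow_unbounded_of_one_lt x one_lt_two
  have hg := integrableOn_rpow_mul hint hx0.le
  have hgI : ∀ a ∈ Icc (0 : ℝ) 1, ∀ b ∈ Icc (0 : ℝ) 1,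
      IntervalIntegrable (fun s => s ^ x * ω s) volume a b := fun a ha b hb =>
    ((intervalIntegrable_iff_integrableOn_Ioo_of_le zero_le_one).2 hg).mono_set
      (uIcc_subset_uIcc (by simpa using ha) (by simpa using hb))
  have hpt : ∀ k, dyadicPoint x k ∈ Icc (0 : ℝ) 1 := fun k =>
    Ico_subset_Icc_self (dyadicPoint_mem_Ico hx0 k)
  have htop : ∫ s in dyadicPoint x 0..1, s ^ x * ω s ≤ 1 * T := by
    rw [dyadicPoint_zero hx]
    exact integral_mul_le_mul_weightTail hω hint hg (one_sub_one_div_nonneg hx)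
      (by linarith [one_div_pos.2 hx0]) le_rfl zero_le_one
      fun s hs => rpow_le_one ((one_sub_one_div_nonneg hx).trans hs.1.le) hs.2.le hx0.le
  calc weightMoment ω x = ∫ s in (0 : ℝ)..1, s ^ x * ω s := by
        rw [intervalIntegral.integral_of_le zero_le_one, integral_Ioc_eq_integral_Ioo, weightMoment]
    _ = (∫ s in dyadicPoint x 0..1, s ^ x * ω s) +
          ∑ k ∈ Finset.range N, ∫ s in dyadicPoint x (k + 1)..dyadicPoint x k, s ^ x * ω s :=
        intervalIntegral.integral_eq_add_sum_integral (dyadicPoint_eq_zero hx0 hN.le)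
          (fun k _ => hgI _ (hpt k) _ (hpt _)) (hgI _ (hpt 0) _ (right_mem_Icc.2 zero_le_one))
    _ ≤ 1 * T + ∑ k ∈ Finset.range N, exp (-2 ^ k) * (C ^ (k + 1) * T) :=
        add_le_add htop (Finset.sum_le_sum fun k _ =>
          hD.integral_dyadic_layer_le hω hint hC.le hx k)
    _ = (1 + C * ∑ k ∈ Finset.range N, C ^ k * exp (-2 ^ k)) * T := by
        rw [Finset.mul_sum, add_mul, Finset.sum_mul]
        congr 1
        exact Finset.sum_congr rfl fun k _ => by ring
    _ ≤ (1 + C * ∑' k : ℕ, C ^ k * exp (-2 ^ k)) * T := by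
        have hT : 0 ≤ T := weightTail_nonneg hω (one_sub_one_div_nonneg hx)
        gcongr
        exact (summable_pow_mul_exp_neg_two_pow hC).sum_le_tsum _ fun k _ => by positivity

end Weight

/-- For `ω ∈ D̂`, `∫_0^1 s^x ω(s) ds ≍ ω̂(1 - 1/x)` uniformly for `x ∈ [1,∞)`. -/
theorem stmt_3 (ω : ℝ → ℝ)
    (hω_nonneg : ∀ r ∈ Set.Ico (0:ℝ) 1, 0 ≤ ω r)
    (hω_int : IntegrableOn ω (Set.Ioo (0:ℝ) 1))
    (C : ℝ) (hC : 0 < C)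
    (hdoubling : ∀ r ∈ Set.Ico (0:ℝ) 1,
      (∫ s in Set.Ioo r 1, ω s) ≤ C * ∫ s in Set.Ioo ((1 + r)/2) 1, ω s) :
    ∃ c₁ > (0:ℝ), ∃ c₂ > (0:ℝ), ∀ x : ℝ, 1 ≤ x →
      c₁ * (∫ s in Set.Ioo (1 - 1/x) 1, ω s) ≤ (∫ s in Set.Ioo (0:ℝ) 1, s ^ x * ω s) ∧
      (∫ s in Set.Ioo (0:ℝ) 1, s ^ x * ω s) ≤ c₂ * ∫ s in Set.Ioo (1 - 1/x) 1, ω s := by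
  have hD : TailDoubling ω C := hdoubling
  have hK : 0 ≤ ∑' k : ℕ, C ^ k * exp (-2 ^ k) := tsum_nonneg fun k => by positivity
  refine ⟨1 / (2 * C), by positivity, 1 + C * ∑' k : ℕ, C ^ k * exp (-2 ^ k),
    add_pos_of_pos_of_nonneg one_pos (mul_nonneg hC.le hK), fun x hx =>
      ⟨?_, hD.weightMoment_le hω_nonneg hω_int hC hx⟩⟩
  rw [one_div_mul_eq_div, div_le_iff₀ (by positivity)]
  exact (hD.weightTail_le_two_mul_weightMoment hω_nonneg hω_int hC.le hx).trans_eq (mul_comm _ _)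
end

section
/- Let ω be a radial weight in the class D̂ and define ω*(r) = ∫_r^1 ω(s) log(s/r) s ds for 0 < r < 1. Then ω*(r) is comparable to ω̂(r)(1-r) as r → 1⁻; more precisely, there exist constants c₁, c₂ > 0 and r₀ ∈ (0,1) such that c₁ ω̂(r)(1-r) ≤ ω*(r) ≤ c₂ ω̂(r)(1-r) for all r₀ ≤ r < 1. -/
open MeasureTheory Set

/-- For `ω ∈ D̂`, `ω*(r) ≍ ω̂(r)(1-r)` as `r → 1⁻`. -/
theorem stmt_4 (ω : ℝ → ℝ)
    (hω_nonneg : ∀ r ∈ Set.Ico (0:ℝ) 1, 0 ≤ ω r)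
    (hω_int : IntegrableOn ω (Set.Ioo (0:ℝ) 1))
    (C : ℝ) (hC : 0 < C)
    (hdoubling : ∀ r ∈ Set.Ico (0:ℝ) 1,
      (∫ s in Set.Ioo r 1, ω s) ≤ C * ∫ s in Set.Ioo ((1 + r)/2) 1, ω s) :
    ∃ c₁ > (0:ℝ), ∃ c₂ > (0:ℝ), ∃ r₀ ∈ Set.Ioo (0:ℝ) 1, ∀ r : ℝ, r₀ ≤ r → r < 1 →
      c₁ * (∫ s in Set.Ioo r 1, ω s) * (1 - r) ≤
        (∫ s in Set.Ioo r 1, ω s * Real.log (s / r) * s) ∧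
      (∫ s in Set.Ioo r 1, ω s * Real.log (s / r) * s) ≤
        c₂ * (∫ s in Set.Ioo r 1, ω s) * (1 - r) := by
  refine ⟨(4*C)⁻¹, by positivity, 2, by norm_num, 1/2, by norm_num, ?_⟩
  intro r hr hr1
  have hr0 : (0:ℝ) < r := by linarith
  set m : ℝ := (1 + r)/2 with hm
  have hrm : r < m := by rw [hm]; linarith
  have hm1 : m < 1 := by rw [hm]; linarith
  have hωr : IntegrableOn ω (Ioo r 1) :=
    hω_int.mono_set (Ioo_subset_Ioo hr0.le le_rfl)
  have hωm : IntegrableOn ω (Ioo m 1) :=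
    hωr.mono_set (Ioo_subset_Ioo hrm.le le_rfl)
  set f : ℝ → ℝ := fun s => ω s * Real.log (s / r) * s with hfdef
  have hmeas : Measurable fun s : ℝ => Real.log (s / r) :=
    Real.measurable_log.comp (measurable_id.div_const r)
  -- pointwise bounds on Ioo r 1
  have hlog_nonneg : ∀ s ∈ Ioo r (1:ℝ), 0 ≤ Real.log (s / r) := by
    intro s hs
    exact Real.log_nonneg ((one_le_div hr0).mpr hs.1.le)
  have hub : ∀ s ∈ Ioo r (1:ℝ), f s ≤ ω s * (2 * (1 - r)) := by
    intro s hs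
    have hs0 : 0 < s := lt_trans hr0 hs.1
    have hω0 : 0 ≤ ω s := hω_nonneg s ⟨hs0.le, hs.2⟩
    have hlog : Real.log (s / r) ≤ s / r - 1 :=
      Real.log_le_sub_one_of_pos (div_pos hs0 hr0)
    have h1 : s / r - 1 = (s - r) / r := by field_simp
    have h2 : (s - r) / r ≤ 2 * (1 - r) := by
      rw [div_le_iff₀ hr0]
      nlinarith [hs.2, hr]
    have h3 : Real.log (s / r) ≤ 2 * (1 - r) := by
      calc Real.log (s / r) ≤ s / r - 1 := hlog
        _ = (s - r) / r := h1
        _ ≤ 2 * (1 - r) := h2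
    have h4 : Real.log (s / r) * s ≤ 2 * (1 - r) := by
      calc Real.log (s / r) * s ≤ Real.log (s / r) * 1 := by
            exact mul_le_mul_of_nonneg_left hs.2.le (hlog_nonneg s hs)
        _ = Real.log (s / r) := mul_one _
        _ ≤ 2 * (1 - r) := h3
    calc f s = ω s * (Real.log (s / r) * s) := by rw [hfdef]; ring
      _ ≤ ω s * (2 * (1 - r)) := mul_le_mul_of_nonneg_left h4 hω0
  have hfnn : ∀ s ∈ Ioo r (1:ℝ), 0 ≤ f s := by
    intro s hs
    have hs0 : 0 < s := lt_trans hr0 hs.1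
    have hω0 : 0 ≤ ω s := hω_nonneg s ⟨hs0.le, hs.2⟩
    exact mul_nonneg (mul_nonneg hω0 (hlog_nonneg s hs)) hs0.le
  -- integrability of f
  have hfm : AEStronglyMeasurable f (volume.restrict (Ioo r 1)) :=
    (hωr.aestronglyMeasurable.mul hmeas.aestronglyMeasurable).mul
      aestronglyMeasurable_id
  have hgint : IntegrableOn (fun s => ω s * (2 * (1 - r))) (Ioo r 1) :=
    hωr.mul_const _
  have hfint : IntegrableOn f (Ioo r 1) := by
    refine hgint.mono' hfm ?_
    rw [ae_restrict_iff' measurableSet_Ioo]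
    filter_upwards with s hs
    have hω0 : 0 ≤ ω s := hω_nonneg s ⟨(lt_trans hr0 hs.1).le, hs.2⟩
    rw [Real.norm_eq_abs, abs_of_nonneg (hfnn s hs)]
    exact hub s hs
  have hfintm : IntegrableOn f (Ioo m 1) :=
    hfint.mono_set (Ioo_subset_Ioo hrm.le le_rfl)
  -- upper bound
  have hupper : (∫ s in Ioo r 1, f s) ≤ 2 * (∫ s in Ioo r 1, ω s) * (1 - r) := by
    have := setIntegral_mono_on hfint hgint measurableSet_Ioo hub
    calc (∫ s in Ioo r 1, f s) ≤ ∫ s in Ioo r 1, ω s * (2 * (1 - r)) := this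
      _ = (∫ s in Ioo r 1, ω s) * (2 * (1 - r)) :=
          integral_mul_const _ _
      _ = 2 * (∫ s in Ioo r 1, ω s) * (1 - r) := by ring
  -- lower bound
  have hlb : ∀ s ∈ Ioo m (1:ℝ), ω s * ((1 - r)/4) ≤ f s := by
    intro s hs
    have hs0 : 0 < s := lt_trans (lt_trans hr0 hrm) hs.1
    have hω0 : 0 ≤ ω s := hω_nonneg s ⟨hs0.le, hs.2⟩
    have hsr : r < s := lt_trans hrm hs.1
    have hlog : 1 - r / s ≤ Real.log (s / r) := by
      have h := Real.log_le_sub_one_of_pos (div_pos hr0 hs0)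
      have heq : Real.log (r / s) = - Real.log (s / r) := by
        rw [Real.log_div hr0.ne' hs0.ne', Real.log_div hs0.ne' hr0.ne']; ring
      rw [heq] at h
      linarith
    have hrs : r / s ≤ r / m := by
      apply div_le_div_of_nonneg_left hr0.le (lt_trans hr0 hrm) hs.1.le
    have hkey : (1 - r)/2 ≤ 1 - r / m := by
      have h1r : (0:ℝ) < 1 + r := by linarith
      have heq : 1 - r / m = (1 - r) / (1 + r) := by
        rw [hm]; field_simp; ring
      rw [heq]
      exact div_le_div_of_nonneg_left (by linarith) h1r (by linarith)
    have hlog2 : (1 - r)/2 ≤ Real.log (s / r) := by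
      have : r / s ≤ r / m := hrs
      linarith
    have hshalf : (1:ℝ)/2 ≤ s := by
      have : (1:ℝ)/2 ≤ m := by rw [hm]; linarith
      linarith [hs.1]
    have hlognn : 0 ≤ Real.log (s / r) := by
      have := hlog2; linarith [hr1]
    calc ω s * ((1 - r)/4) = ω s * ((1 - r)/2 * (1/2)) := by ring
      _ ≤ ω s * (Real.log (s / r) * s) := by
          apply mul_le_mul_of_nonneg_left _ hω0
          apply mul_le_mul hlog2 hshalf (by norm_num) hlognn
      _ = f s := by rw [hfdef]; ring
  have hgmint : IntegrableOn (fun s => ω s * ((1 - r)/4)) (Ioo m 1) :=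
    hωm.mul_const _
  have hsub : (∫ s in Ioo m 1, f s) ≤ ∫ s in Ioo r 1, f s := by
    apply setIntegral_mono_set hfint
    · filter_upwards [ae_restrict_mem measurableSet_Ioo] with s hs using hfnn s hs
    · exact Filter.Eventually.of_forall (fun s hs => Ioo_subset_Ioo hrm.le le_rfl hs)
  have hdou := hdoubling r ⟨hr0.le, hr1⟩
  have hlower : (4*C)⁻¹ * (∫ s in Ioo r 1, ω s) * (1 - r) ≤ ∫ s in Ioo r 1, f s := by
    have h1 : (∫ s in Ioo m 1, ω s * ((1 - r)/4)) ≤ ∫ s in Ioo m 1, f s :=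
      setIntegral_mono_on hgmint hfintm measurableSet_Ioo hlb
    have h2 : (∫ s in Ioo m 1, ω s * ((1 - r)/4))
        = (∫ s in Ioo m 1, ω s) * ((1 - r)/4) := integral_mul_const _ _
    have h3 : (∫ s in Ioo r 1, ω s) ≤ C * ∫ s in Ioo m 1, ω s := hdou
    have h4 : (4*C)⁻¹ * (∫ s in Ioo r 1, ω s) * (1 - r)
        ≤ (∫ s in Ioo m 1, ω s) * ((1 - r)/4) := by
      have hnn : (0:ℝ) ≤ 1 - r := by linarith
      have := mul_le_mul_of_nonneg_right h3 (by positivity : (0:ℝ) ≤ (4*C)⁻¹ * (1 - r))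
      calc (4*C)⁻¹ * (∫ s in Ioo r 1, ω s) * (1 - r)
          = (∫ s in Ioo r 1, ω s) * ((4*C)⁻¹ * (1 - r)) := by ring
        _ ≤ C * (∫ s in Ioo m 1, ω s) * ((4*C)⁻¹ * (1 - r)) := this
        _ = (∫ s in Ioo m 1, ω s) * ((1 - r)/4) := by
            field_simp
    linarith
  exact ⟨hlower, hupper⟩
end

section
/- Let φ be an analytic self-map of the unit disc D and ω a radial weight. Define the generalized Nevanlinna counting function N_{φ,ω*}(z) = Σ_{ζ ∈ φ⁻¹(z)} ω*(ζ) (points repeated with multiplicity, and ω*(ζ) = 0 for |ζ| = 1), where ω*(ζ) = ∫_{|ζ|}^1 ω(s) log(s/|ζ|) s ds. Then for every z ∈ D with z ≠ φ(0), N_{φ,ω*}(z) ≤ ω*( (z - φ(0)) / (1 - conj(φ(0)) z) ). -/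
open MeasureTheory Set Metric
open scoped Classical

/-- The multiplicity of `ζ` as a preimage of `z` under `φ` (the order of the zero of
`φ - z` at `ζ`, and `0` if `φ - z` is not analytic at `ζ` or the order is infinite). -/
noncomputable def multOf (φ : ℂ → ℂ) (z ζ : ℂ) : ℕ :=
  if h : AnalyticAt ℂ (fun w => φ w - z) ζ then (analyticOrderAt (fun w => φ w - z) ζ).toNat else 0

/-- `ω*(r) = ∫_r^1 ω(s) log(s/r) s ds` (which vanishes for `r = 1`). -/
noncomputable def wstar (ω : ℝ → ℝ) (r : ℝ) : ℝ :=
  ∫ s in Set.Ioo r 1, ω s * Real.log (s / r) * s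

/-- The generalized Nevanlinna counting function
`N_{φ,ω*}(z) = Σ_{ζ ∈ φ⁻¹(z)} ω*(|ζ|)`, preimages counted with multiplicity. -/
noncomputable def nev (ω : ℝ → ℝ) (φ : ℂ → ℂ) (z : ℂ) : ℝ :=
  ∑' ζ : ↥(Metric.ball (0:ℂ) 1 ∩ φ ⁻¹' {z}), (multOf φ z ζ : ℝ) * wstar ω ‖(ζ : ℂ)‖

/-! Composing `φ` with the disc automorphism `u ↦ (u - z) / (1 - z̄ u)` gives a self-map `F` of the
disc whose zeros are the `z`-points of `φ`, with the same multiplicities, and with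
`d := |F 0| = |(z - φ 0) / (1 - conj (φ 0) z)|`. Jensen's formula on the circles `|w| = R`, `R → 1`,
yields Littlewood's inequality `Σ m(ζ) log (1/|ζ|) ≤ log (1/d)`.

Since `ω*(r) = ∫₀¹ ω(t) log⁺(t/r) t dt`, it remains to show `Σ m(ζ) log⁺(t/|ζ|) ≤ log⁺(t/d)` for
`0 < t < 1`. As a function of `log r`, `log⁺(t/r)` is convex, vanishes at `r = 1` and equals
`log⁺(t/d)` at `r = d`, so it lies below the chord: `log⁺(t/r) log(1/d) ≤ log⁺(t/d) log(1/r)` for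
`d ≤ r ≤ 1`. Summing this against Littlewood's inequality gives the claim. -/

open ComplexConjugate

section Mobius

theorem normSq_one_sub_conj_mul_sub_normSq_sub (a b : ℂ) :
    Complex.normSq (1 - conj a * b) - Complex.normSq (b - a)
      = (1 - Complex.normSq a) * (1 - Complex.normSq b) := by
  simp only [Complex.normSq_apply, Complex.sub_re, Complex.sub_im, Complex.mul_re,
    Complex.mul_im, Complex.one_re, Complex.one_im, Complex.conj_re, Complex.conj_im]
  ring

theorem norm_sub_lt_norm_one_sub_conj_mul {a b : ℂ} (ha : ‖a‖ < 1) (hb : ‖b‖ < 1) :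
    ‖b - a‖ < ‖1 - conj a * b‖ := by
  have ha' : Complex.normSq a < 1 := by rw [Complex.normSq_eq_norm_sq]; nlinarith [norm_nonneg a]
  have hb' : Complex.normSq b < 1 := by rw [Complex.normSq_eq_norm_sq]; nlinarith [norm_nonneg b]
  refine lt_of_pow_lt_pow_left₀ 2 (norm_nonneg _) ?_
  rw [← Complex.normSq_eq_norm_sq, ← Complex.normSq_eq_norm_sq]
  nlinarith [normSq_one_sub_conj_mul_sub_normSq_sub a b]

theorem one_sub_conj_mul_ne_zero {a b : ℂ} (ha : ‖a‖ < 1) (hb : ‖b‖ < 1) :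
    1 - conj a * b ≠ 0 :=
  norm_pos_iff.mp ((norm_nonneg _).trans_lt (norm_sub_lt_norm_one_sub_conj_mul ha hb))

theorem norm_sub_div_one_sub_conj_mul_lt_one {a b : ℂ} (ha : ‖a‖ < 1) (hb : ‖b‖ < 1) :
    ‖(b - a) / (1 - conj a * b)‖ < 1 := by
  rw [norm_div, div_lt_one (norm_pos_iff.mpr (one_sub_conj_mul_ne_zero ha hb))]
  exact norm_sub_lt_norm_one_sub_conj_mul ha hb

theorem norm_one_sub_conj_mul_comm (a b : ℂ) : ‖1 - conj a * b‖ = ‖1 - conj b * a‖ := by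
  rw [← Complex.norm_conj (1 - conj a * b), map_sub, map_one, map_mul, Complex.conj_conj,
    mul_comm]

end Mobius

theorem analyticOrderAt_mul_of_ne_zero_right {𝕜 : Type*} [NontriviallyNormedField 𝕜]
    {f g : 𝕜 → 𝕜} {z₀ : 𝕜} (hf : AnalyticAt 𝕜 f z₀) (hg : AnalyticAt 𝕜 g z₀) (hg0 : g z₀ ≠ 0) :
    analyticOrderAt (f * g) z₀ = analyticOrderAt f z₀ := by
  rw [analyticOrderAt_mul hf hg, hg.analyticOrderAt_eq_zero.mpr hg0, add_zero]

theorem multOf_eq_analyticOrderNatAt_div {φ g : ℂ → ℂ} {z ζ : ℂ} (hφ : AnalyticAt ℂ φ ζ)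
    (hg : AnalyticAt ℂ g ζ) (hg0 : g ζ ≠ 0) :
    multOf φ z ζ = analyticOrderNatAt (fun w => (φ w - z) / g w) ζ := by
  have hφz : AnalyticAt ℂ (fun w => φ w - z) ζ := hφ.sub analyticAt_const
  have hdiv : (fun w => (φ w - z) / g w) = (fun w => φ w - z) * g⁻¹ :=
    funext fun w => div_eq_mul_inv _ _
  rw [multOf, dif_pos hφz, analyticOrderNatAt, hdiv,
    analyticOrderAt_mul_of_ne_zero_right hφz (hg.inv hg0) (inv_ne_zero hg0)]

theorem divisor_eq_analyticOrderNatAt {𝕜 E : Type*} [NontriviallyNormedField 𝕜]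
    [NormedAddCommGroup E] [NormedSpace 𝕜 E] {f : 𝕜 → E} {U : Set 𝕜} (hf : AnalyticOnNhd 𝕜 f U)
    {u : 𝕜} (hu : u ∈ U) : MeromorphicOn.divisor f U u = analyticOrderNatAt f u := by
  rw [MeromorphicOn.AnalyticOnNhd.divisor_apply hf hu, analyticOrderNatAt]
  cases analyticOrderAt f u <;> rfl

open Real Filter Topology

section Littlewood

variable {f : ℂ → ℂ}

theorem sum_analyticOrderNatAt_mul_log_le_of_subset_closedBall
    (hf : AnalyticOnNhd ℂ f (ball 0 1)) (hf1 : ∀ w ∈ ball (0 : ℂ) 1, ‖f w‖ ≤ 1) (hf0 : f 0 ≠ 0)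
    {R : ℝ} (hR0 : 0 < R) (hR1 : R < 1) {s : Finset ℂ} (hs : ↑s ⊆ closedBall (0 : ℂ) R) :
    ∑ ζ ∈ s, (analyticOrderNatAt f ζ : ℝ) * log (R * ‖ζ‖⁻¹) ≤ log ‖f 0‖⁻¹ := by
  have hR : |R| = R := abs_of_pos hR0
  have hball : closedBall (0 : ℂ) R ⊆ ball 0 1 := closedBall_subset_ball hR1
  have hfR : AnalyticOnNhd ℂ f (closedBall 0 R) := hf.mono hball
  set D := MeromorphicOn.divisor f (closedBall (0 : ℂ) R)
  set g : ℂ → ℝ := fun u => D u * log (R * ‖0 - u‖⁻¹)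
  have hjensen := (hR ▸ hfR).circleAverage_log_norm hR0.ne' hf0
  rw [hR] at hjensen
  have havg : circleAverage (log ‖f ·‖) 0 R ≤ 0 := by
    rw [← hR] at hfR hball
    exact circleAverage_mono_on_of_le_circle
      (hfR.mono sphere_subset_closedBall).meromorphicOn.circleIntegrable_log_norm
      fun x hx => log_nonpos (norm_nonneg _) (hf1 x (hball (sphere_subset_closedBall hx)))
  have hg_nonneg : ∀ u, 0 ≤ g u := by
    intro u
    by_cases hu : u ∈ closedBall (0 : ℂ) R
    · refine mul_nonneg (mod_cast MeromorphicOn.AnalyticOnNhd.divisor_nonneg hfR u) ?_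
      rcases eq_or_ne u 0 with rfl | hu0
      · simp
      · rw [mem_closedBall_zero_iff] at hu
        rw [zero_sub, norm_neg, ← div_eq_mul_inv]
        exact log_nonneg ((one_le_div (norm_pos_iff.mpr hu0)).mpr hu)
    · simp [g, D, hu]
  have hg_fin : g.support.Finite :=
    (D.finiteSupport (isCompact_closedBall 0 R)).subset fun u hu h => hu (by simp [g, h])
  have hsum_le : ∑ ζ ∈ s, g ζ ≤ ∑ᶠ u, g u := by
    rw [finsum_eq_sum_of_support_subset g (s := hg_fin.toFinset ∪ s) (by simp)]
    exact Finset.sum_le_sum_of_subset_of_nonneg Finset.subset_union_right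
      fun u _ _ => hg_nonneg u
  have hsum_eq : ∑ ζ ∈ s, g ζ = ∑ ζ ∈ s, (analyticOrderNatAt f ζ : ℝ) * log (R * ‖ζ‖⁻¹) := by
    refine Finset.sum_congr rfl fun ζ hζ => ?_
    simp only [g, D, divisor_eq_analyticOrderNatAt hfR (hs hζ), zero_sub, norm_neg,
      Int.cast_natCast]
  rw [log_inv]
  linarith

theorem sum_analyticOrderNatAt_mul_log_inv_le
    (hf : AnalyticOnNhd ℂ f (ball 0 1)) (hf1 : ∀ w ∈ ball (0 : ℂ) 1, ‖f w‖ ≤ 1) (hf0 : f 0 ≠ 0)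
    {s : Finset ℂ} (hs : ↑s ⊆ ball (0 : ℂ) 1) :
    ∑ ζ ∈ s, (analyticOrderNatAt f ζ : ℝ) * log ‖ζ‖⁻¹ ≤ log ‖f 0‖⁻¹ := by
  set M : ℝ := ∑ ζ ∈ s, (analyticOrderNatAt f ζ : ℝ)
  obtain ⟨R₀, ⟨hR₀, hR₀1⟩, hsR₀⟩ := exists_pos_lt_subset_ball one_pos s.finite_toSet.isClosed hs
  have hbound : ∀ R ∈ Ioo R₀ 1,
      ∑ ζ ∈ s, (analyticOrderNatAt f ζ : ℝ) * log ‖ζ‖⁻¹ ≤ log ‖f 0‖⁻¹ - M * log R := by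
    intro R hR
    have hR0 : 0 < R := hR₀.trans hR.1
    have hR_bound := sum_analyticOrderNatAt_mul_log_le_of_subset_closedBall hf hf1 hf0 hR0 hR.2
      (hsR₀.trans (ball_subset_closedBall.trans (closedBall_subset_closedBall hR.1.le)))
    have hterm : ∀ ζ ∈ s, (analyticOrderNatAt f ζ : ℝ) * log ‖ζ‖⁻¹ + analyticOrderNatAt f ζ * log R
        ≤ (analyticOrderNatAt f ζ : ℝ) * log (R * ‖ζ‖⁻¹) := by
      intro ζ _
      rcases eq_or_ne ζ 0 with rfl | hζ
      · simp [mul_nonpos_of_nonneg_of_nonpos, log_nonpos hR0.le hR.2.le]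
      · rw [log_mul hR0.ne' (by simpa using hζ)]; linarith
    have hsum := Finset.sum_le_sum hterm
    rw [Finset.sum_add_distrib, ← Finset.sum_mul] at hsum
    linarith
  have hlim : Tendsto (fun R => log ‖f 0‖⁻¹ - M * log R) (𝓝[<] 1) (𝓝 (log ‖f 0‖⁻¹)) := by
    have : ContinuousAt (fun R => log ‖f 0‖⁻¹ - M * log R) 1 :=
      continuousAt_const.sub (continuousAt_const.mul (continuousAt_log one_ne_zero))
    simpa using this.tendsto.mono_left nhdsWithin_le_nhds
  exact ge_of_tendsto hlim (eventually_of_mem (Ioo_mem_nhdsLT hR₀1) hbound)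

end Littlewood

section Weight

variable {ω : ℝ → ℝ}

theorem posLog_div_eq_zero {x r : ℝ} (hx : 0 ≤ x) (hxr : x ≤ r) : log⁺ (x / r) = 0 := by
  have hr : 0 ≤ r := hx.trans hxr
  rw [posLog_eq_zero_iff, abs_of_nonneg (div_nonneg hx hr)]
  exact div_le_one_of_le₀ hxr hr

theorem posLog_div_eq_log {x r : ℝ} (hr : 0 ≤ r) (hrx : r ≤ x) : log⁺ (x / r) = log (x / r) := by
  rcases hr.eq_or_lt with rfl | hr
  · simp
  · exact max_eq_right (log_nonneg ((one_le_div hr).mpr hrx))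

theorem wstar_eq_setIntegral_posLog {r : ℝ} (hr : 0 ≤ r) :
    wstar ω r = ∫ x in Ioo 0 1, ω x * log⁺ (x / r) * x := by
  rw [setIntegral_eq_of_subset_of_forall_sdiff_eq_zero measurableSet_Ioo
    (Ioo_subset_Ioo_left hr), wstar]
  · exact setIntegral_congr_fun measurableSet_Ioo fun x hx => by
      simp only [posLog_div_eq_log hr hx.1.le]
  · rintro x ⟨hx, hxr⟩
    have hxr : x ≤ r := not_lt.mp fun h => hxr ⟨h, hx.2⟩
    rw [posLog_div_eq_zero hx.1.le hxr, mul_zero, zero_mul]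

theorem wstar_nonneg (hω0 : ∀ x ∈ Ioo (0 : ℝ) 1, 0 ≤ ω x) {r : ℝ} (hr : 0 ≤ r) :
    0 ≤ wstar ω r := by
  rw [wstar_eq_setIntegral_posLog hr]
  exact setIntegral_nonneg measurableSet_Ioo fun x hx =>
    mul_nonneg (mul_nonneg (hω0 x hx) posLog_nonneg) hx.1.le

theorem integrableOn_mul_posLog_div_mul (hω : IntegrableOn ω (Ioo 0 1)) (r : ℝ) :
    IntegrableOn (fun x => ω x * log⁺ (x / r) * x) (Ioo 0 1) := by
  have hbound : ∀ᵐ x ∂volume.restrict (Ioo (0 : ℝ) 1), ‖log⁺ (x / r) * x‖ ≤ log⁺ r⁻¹ := by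
    refine (ae_restrict_iff' measurableSet_Ioo).mpr (Eventually.of_forall fun x hx => ?_)
    rw [norm_mul, norm_of_nonneg posLog_nonneg, norm_of_nonneg hx.1.le, ← posLog_abs r⁻¹,
      ← posLog_abs (x / r)]
    calc log⁺ |x / r| * x ≤ log⁺ |r⁻¹| * 1 := by
          refine mul_le_mul (posLog_le_posLog (abs_nonneg _) ?_) hx.2.le hx.1.le posLog_nonneg
          rw [div_eq_mul_inv, abs_mul, abs_of_pos hx.1]
          exact mul_le_of_le_one_left (abs_nonneg _) hx.2.le
      _ = log⁺ |r⁻¹| := mul_one _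
  simp_rw [mul_assoc]
  exact hω.mul_bdd (by fun_prop) hbound

theorem posLog_div_mul_log_inv_le {d r t : ℝ} (hd : 0 < d) (hdr : d ≤ r) (hr : r ≤ 1)
    (ht0 : 0 ≤ t) (ht1 : t ≤ 1) : log⁺ (t / r) * log d⁻¹ ≤ log⁺ (t / d) * log r⁻¹ := by
  have hr0 : 0 < r := hd.trans_le hdr
  rcases le_or_gt t r with htr | hrt
  · rw [posLog_div_eq_zero ht0 htr, zero_mul]
    exact mul_nonneg posLog_nonneg (log_nonneg (one_le_inv₀ hr0 |>.mpr hr))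
  · have ht : 0 < t := hr0.trans hrt
    rw [posLog_div_eq_log hr0.le hrt.le, posLog_div_eq_log hd.le (hdr.trans hrt.le),
      log_div ht.ne' hr0.ne', log_div ht.ne' hd.ne', log_inv, log_inv]
    nlinarith [log_le_log hd hdr, log_nonpos ht0 ht1]

theorem sum_mul_posLog_div_le {ι : Type*} {s : Finset ι} {m : ι → ℕ} {r : ι → ℝ} {d t : ℝ}
    (hd0 : 0 < d) (hd1 : d < 1) (hr : ∀ i ∈ s, r i ∈ Icc 0 1) (ht0 : 0 ≤ t) (ht1 : t ≤ 1)
    (h : ∑ i ∈ s, m i * log (r i)⁻¹ ≤ log d⁻¹) :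
    ∑ i ∈ s, m i * log⁺ (t / r i) ≤ log⁺ (t / d) := by
  have hlogd : 0 < log d⁻¹ := log_pos ((one_lt_inv₀ hd0).mpr hd1)
  have hlog_inv_nonneg : ∀ i ∈ s, 0 ≤ log (r i)⁻¹ := fun i hi => by
    rw [log_inv]; exact neg_nonneg.mpr (log_nonpos (hr i hi).1 (hr i hi).2)
  have hterm : ∀ i ∈ s, m i * log⁺ (t / r i) * log d⁻¹ ≤ log⁺ (t / d) * (m i * log (r i)⁻¹) := by
    intro i hi
    obtain ⟨hr0, hr1⟩ := hr i hi
    rcases eq_or_ne (m i) 0 with hm | hm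
    · simp [hm]
    rcases hr0.eq_or_lt with hr0 | hr0
    · simp [← hr0]
    have hdr : d ≤ r i := by
      have hm1 : (1 : ℝ) ≤ m i := Nat.one_le_cast.mpr (Nat.one_le_iff_ne_zero.mpr hm)
      have hlog : log (r i)⁻¹ ≤ log d⁻¹ :=
        (le_mul_of_one_le_left (hlog_inv_nonneg i hi) hm1).trans
          ((Finset.single_le_sum (fun j hj => mul_nonneg (Nat.cast_nonneg _)
            (hlog_inv_nonneg j hj)) hi).trans h)
      exact (inv_le_inv₀ hr0 hd0).mp ((log_le_log_iff (inv_pos.2 hr0) (inv_pos.2 hd0)).mp hlog)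
    calc (m i : ℝ) * log⁺ (t / r i) * log d⁻¹ = m i * (log⁺ (t / r i) * log d⁻¹) := mul_assoc ..
      _ ≤ m i * (log⁺ (t / d) * log (r i)⁻¹) :=
        mul_le_mul_of_nonneg_left (posLog_div_mul_log_inv_le hd0 hdr hr1 ht0 ht1)
          (Nat.cast_nonneg _)
      _ = log⁺ (t / d) * (m i * log (r i)⁻¹) := by ring
  refine le_of_mul_le_mul_right ?_ hlogd
  calc (∑ i ∈ s, m i * log⁺ (t / r i)) * log d⁻¹
      ≤ ∑ i ∈ s, log⁺ (t / d) * (m i * log (r i)⁻¹) := by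
        rw [Finset.sum_mul]; exact Finset.sum_le_sum hterm
    _ ≤ log⁺ (t / d) * log d⁻¹ := by
        rw [← Finset.mul_sum]; exact mul_le_mul_of_nonneg_left h posLog_nonneg

theorem sum_mul_wstar_le (hω0 : ∀ x ∈ Ioo (0 : ℝ) 1, 0 ≤ ω x) (hω : IntegrableOn ω (Ioo 0 1))
    {ι : Type*} {s : Finset ι} {m : ι → ℕ} {r : ι → ℝ} {d : ℝ}
    (hd0 : 0 < d) (hd1 : d < 1) (hr : ∀ i ∈ s, r i ∈ Icc 0 1)
    (h : ∑ i ∈ s, m i * log (r i)⁻¹ ≤ log d⁻¹) :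
    ∑ i ∈ s, m i * wstar ω (r i) ≤ wstar ω d := by
  have hint : ∀ i ∈ s, IntegrableOn (fun x => m i * (ω x * log⁺ (x / r i) * x)) (Ioo 0 1) :=
    fun i _ => (integrableOn_mul_posLog_div_mul hω (r i)).const_mul _
  calc ∑ i ∈ s, m i * wstar ω (r i)
      = ∫ x in Ioo 0 1, ∑ i ∈ s, m i * (ω x * log⁺ (x / r i) * x) := by
        rw [integral_finsetSum s hint]
        refine Finset.sum_congr rfl fun i hi => ?_
        rw [wstar_eq_setIntegral_posLog (hr i hi).1, integral_const_mul]
    _ ≤ ∫ x in Ioo 0 1, ω x * log⁺ (x / d) * x := by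
        refine setIntegral_mono_on (integrable_finsetSum s hint)
          (integrableOn_mul_posLog_div_mul hω d) measurableSet_Ioo fun x hx => ?_
        have hsum := sum_mul_posLog_div_le hd0 hd1 hr hx.1.le hx.2.le h
        calc ∑ i ∈ s, m i * (ω x * log⁺ (x / r i) * x)
            = ω x * (∑ i ∈ s, m i * log⁺ (x / r i)) * x := by
              rw [Finset.mul_sum, Finset.sum_mul]
              exact Finset.sum_congr rfl fun i _ => by ring
          _ ≤ ω x * log⁺ (x / d) * x :=
              mul_le_mul_of_nonneg_right (mul_le_mul_of_nonneg_left hsum (hω0 x hx)) hx.1.le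
    _ = wstar ω d := (wstar_eq_setIntegral_posLog hd0.le).symm

end Weight

theorem nev_le_wstar_norm {ω : ℝ → ℝ} (hω0 : ∀ x ∈ Ioo (0 : ℝ) 1, 0 ≤ ω x)
    (hω : IntegrableOn ω (Ioo 0 1)) {φ F : ℂ → ℂ} {z : ℂ} (hF : AnalyticOnNhd ℂ F (ball 0 1))
    (hFmaps : MapsTo F (ball 0 1) (ball 0 1)) (hF0 : F 0 ≠ 0)
    (hmult : ∀ ζ ∈ ball (0 : ℂ) 1, φ ζ = z → multOf φ z ζ = analyticOrderNatAt F ζ) :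
    nev ω φ z ≤ wstar ω ‖F 0‖ := by
  have hd0 : 0 < ‖F 0‖ := norm_pos_iff.mpr hF0
  have hd1 : ‖F 0‖ < 1 := mem_ball_zero_iff.mp (hFmaps (mem_ball_self one_pos))
  refine tsum_le_of_sum_le' (wstar_nonneg hω0 hd0.le) fun t => ?_
  have hlittlewood := sum_analyticOrderNatAt_mul_log_inv_le hF
    (fun w hw => (mem_ball_zero_iff.mp (hFmaps hw)).le) hF0
    (s := t.map (Function.Embedding.subtype _)) (by
      intro ζ hζ
      obtain ⟨ζ', -, rfl⟩ := Finset.mem_map.mp hζ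
      exact ζ'.2.1)
  rw [Finset.sum_map] at hlittlewood
  refine sum_mul_wstar_le hω0 hω hd0 hd1
    (fun ζ _ => ⟨norm_nonneg _, (mem_ball_zero_iff.mp ζ.2.1).le⟩) ?_
  refine le_of_eq_of_le (Finset.sum_congr rfl fun ζ _ => ?_) hlittlewood
  rw [hmult ζ ζ.2.1 ζ.2.2]
  rfl

/-- `N_{φ,ω*}(z) ≤ ω*((z - φ(0))/(1 - conj(φ(0)) z))` for `z ≠ φ(0)`. -/
theorem stmt_5 (ω : ℝ → ℝ)
    (hω_nonneg : ∀ r ∈ Set.Ico (0:ℝ) 1, 0 ≤ ω r)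
    (hω_int : IntegrableOn ω (Set.Ioo (0:ℝ) 1))
    (φ : ℂ → ℂ) (hφ : DifferentiableOn ℂ φ (Metric.ball 0 1))
    (hmaps : Set.MapsTo φ (Metric.ball 0 1) (Metric.ball 0 1))
    (z : ℂ) (hz : z ∈ Metric.ball (0:ℂ) 1) (hz0 : z ≠ φ 0) :
    nev ω φ z ≤ wstar ω ‖(z - φ 0) / (1 - (starRingEnd ℂ) (φ 0) * z)‖ := by
  have hz1 : ‖z‖ < 1 := mem_ball_zero_iff.mp hz
  have hφ1 : ∀ w ∈ ball (0 : ℂ) 1, ‖φ w‖ < 1 := fun w hw => mem_ball_zero_iff.mp (hmaps hw)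
  have hφa : AnalyticOnNhd ℂ φ (ball 0 1) := hφ.analyticOnNhd isOpen_ball
  have hden : AnalyticOnNhd ℂ (fun w => 1 - conj z * φ w) (ball 0 1) :=
    analyticOnNhd_const.sub (analyticOnNhd_const.mul hφa)
  have hden0 : ∀ w ∈ ball (0 : ℂ) 1, 1 - conj z * φ w ≠ 0 :=
    fun w hw => one_sub_conj_mul_ne_zero hz1 (hφ1 w hw)
  set F : ℂ → ℂ := fun w => (φ w - z) / (1 - conj z * φ w)
  have hF : AnalyticOnNhd ℂ F (ball 0 1) := (hφa.sub analyticOnNhd_const).div hden hden0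
  have hFmaps : MapsTo F (ball 0 1) (ball 0 1) := fun w hw =>
    mem_ball_zero_iff.mpr (norm_sub_div_one_sub_conj_mul_lt_one hz1 (hφ1 w hw))
  have hF0 : F 0 ≠ 0 :=
    div_ne_zero (sub_ne_zero.mpr (Ne.symm hz0)) (hden0 0 (mem_ball_self one_pos))
  calc nev ω φ z ≤ wstar ω ‖F 0‖ :=
        nev_le_wstar_norm (fun x hx => hω_nonneg x (Ioo_subset_Ico_self hx)) hω_int hF hFmaps hF0
          fun ζ hζ _ => multOf_eq_analyticOrderNatAt_div (hφa ζ hζ) (hden ζ hζ) (hden0 ζ hζ)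
    _ = wstar ω ‖(z - φ 0) / (1 - conj (φ 0) * z)‖ := by
        rw [norm_div, norm_div, norm_sub_rev, norm_one_sub_conj_mul_comm]
end

section
/- Let ω be a radial weight in the class D̂ and 0 < α < ∞. Define ω*_{α-2}(z) = (1-|z|)^{α-2} ω*(z), where ω*(z) = ∫_{|z|}^1 ω(s) log(s/|z|) s ds. Then the weight ω*_{α-2} is regular: there exist constants c₁, c₂ > 0 such that c₁ ω*_{α-2}(r) ≤ (1/(1-r)) ∫_r^1 ω*_{α-2}(s) ds ≤ c₂ ω*_{α-2}(r) for all 1/2 ≤ r < 1. -/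
open MeasureTheory Set

section Aux

variable (ω : ℝ → ℝ)

/-- Integrability of the inner integrand. -/
lemma inner_integrable (hω_int : IntegrableOn ω (Ioo (0:ℝ) 1))
    (hω_nonneg : ∀ r ∈ Set.Ico (0:ℝ) 1, 0 ≤ ω r)
    {t : ℝ} (ht : 1/2 ≤ t) (ht1 : t < 1) :
    IntegrableOn (fun s => ω s * Real.log (s / t) * s) (Ioo t 1) := by
  have hsub : Ioo t 1 ⊆ Ioo (0:ℝ) 1 := Ioo_subset_Ioo (by linarith) le_rfl
  have hωi : IntegrableOn ω (Ioo t 1) := hω_int.mono_set hsub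
  refine Integrable.mono' (hωi.const_mul (Real.log 2)) ?_ ?_
  · exact (hωi.aestronglyMeasurable.mul
      ((Real.measurable_log.comp (measurable_id.div_const t)).aestronglyMeasurable)).mul
      measurable_id.aestronglyMeasurable
  · refine (ae_restrict_iff' measurableSet_Ioo).mpr (ae_of_all _ fun s hs => ?_)
    obtain ⟨hs1, hs2⟩ := hs
    have hω0 : 0 ≤ ω s := hω_nonneg s ⟨by linarith, by linarith⟩
    have ht0 : (0:ℝ) < t := by linarith
    have hlog0 : 0 ≤ Real.log (s/t) := Real.log_nonneg (by rw [le_div_iff₀ ht0]; linarith)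
    have hlog2 : Real.log (s/t) ≤ Real.log 2 := by
      apply Real.log_le_log (div_pos (by linarith) ht0)
      rw [div_le_iff₀ ht0]; linarith
    rw [Real.norm_eq_abs, abs_of_nonneg (mul_nonneg (mul_nonneg hω0 hlog0) (by linarith))]
    nlinarith [mul_nonneg hω0 hlog0, mul_nonneg hω0 (sub_nonneg.2 hlog2)]


lemma what_nonneg (hω_nonneg : ∀ r ∈ Set.Ico (0:ℝ) 1, 0 ≤ ω r) {t : ℝ} (ht0 : 0 ≤ t) :
    0 ≤ ∫ s in Ioo t 1, ω s :=
  setIntegral_nonneg measurableSet_Ioo fun s hs => hω_nonneg s ⟨by linarith [hs.1], hs.2⟩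

lemma what_mono (hω_int : IntegrableOn ω (Ioo (0:ℝ) 1))
    (hω_nonneg : ∀ r ∈ Set.Ico (0:ℝ) 1, 0 ≤ ω r) {a b : ℝ} (h0 : 0 ≤ a) (hab : a ≤ b) :
    (∫ s in Ioo b 1, ω s) ≤ ∫ s in Ioo a 1, ω s := by
  refine setIntegral_mono_set (hω_int.mono_set (Ioo_subset_Ioo h0 le_rfl)) ?_
    (HasSubset.Subset.eventuallyLE (Ioo_subset_Ioo hab le_rfl))
  refine (ae_restrict_iff' measurableSet_Ioo).mpr (ae_of_all _ fun s hs => ?_)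
  exact hω_nonneg s ⟨by linarith [hs.1], hs.2⟩

lemma wstar_nonneg_s8 (hω_nonneg : ∀ r ∈ Set.Ico (0:ℝ) 1, 0 ≤ ω r) {t : ℝ} (ht : 1/2 ≤ t) :
    0 ≤ ∫ s in Ioo t 1, ω s * Real.log (s / t) * s := by
  refine setIntegral_nonneg measurableSet_Ioo fun s hs => ?_
  obtain ⟨hs1, hs2⟩ := hs
  have ht0 : (0:ℝ) < t := by linarith
  have hω0 : 0 ≤ ω s := hω_nonneg s ⟨by linarith, by linarith⟩
  have hlog0 : 0 ≤ Real.log (s/t) := Real.log_nonneg (by rw [le_div_iff₀ ht0]; linarith)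
  have : (0:ℝ) ≤ s := by linarith
  positivity

lemma wstar_le (hω_int : IntegrableOn ω (Ioo (0:ℝ) 1))
    (hω_nonneg : ∀ r ∈ Set.Ico (0:ℝ) 1, 0 ≤ ω r)
    {t : ℝ} (ht : 1/2 ≤ t) (ht1 : t < 1) :
    (∫ s in Ioo t 1, ω s * Real.log (s / t) * s) ≤ 2*(1-t) * ∫ s in Ioo t 1, ω s := by
  have hsub : Ioo t 1 ⊆ Ioo (0:ℝ) 1 := Ioo_subset_Ioo (by linarith) le_rfl
  have h1 : (∫ s in Ioo t 1, ω s * Real.log (s / t) * s) ≤ ∫ s in Ioo t 1, (2*(1-t)) * ω s := by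
    refine setIntegral_mono_on (inner_integrable ω hω_int hω_nonneg ht ht1)
      ((hω_int.mono_set hsub).const_mul _) measurableSet_Ioo (fun s hs => ?_)
    obtain ⟨hs1, hs2⟩ := hs
    have ht0 : (0:ℝ) < t := by linarith
    have hω0 : 0 ≤ ω s := hω_nonneg s ⟨by linarith, by linarith⟩
    set L := Real.log (s/t) with hLdef
    have hL0 : 0 ≤ L := Real.log_nonneg (by rw [le_div_iff₀ ht0]; linarith)
    have hL : L ≤ s/t - 1 := Real.log_le_sub_one_of_pos (div_pos (by linarith) ht0)
    have htL : t * L ≤ s - t := by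
      have := (mul_le_mul_of_nonneg_left hL ht0.le)
      have h2 : t * (s/t - 1) = s - t := by field_simp
      linarith
    have h2 : L ≤ 2*(1-t) := by nlinarith
    nlinarith [mul_nonneg hω0 hL0, mul_le_mul_of_nonneg_left h2 hω0,
      mul_nonneg (mul_nonneg hω0 hL0) (sub_nonneg.2 hs2.le)]
  rwa [MeasureTheory.integral_const_mul] at h1

lemma wstar_ge (hω_int : IntegrableOn ω (Ioo (0:ℝ) 1))
    (hω_nonneg : ∀ r ∈ Set.Ico (0:ℝ) 1, 0 ≤ ω r)
    {t : ℝ} (ht : 1/2 ≤ t) (ht1 : t < 1) :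
    (1-t)/4 * (∫ s in Ioo ((1+t)/2) 1, ω s) ≤ ∫ s in Ioo t 1, ω s * Real.log (s / t) * s := by
  have ht0 : (0:ℝ) < t := by linarith
  have hm : t < (1+t)/2 := by linarith
  have hfi := inner_integrable ω hω_int hω_nonneg ht ht1
  have step1 : (∫ s in Ioo ((1+t)/2) 1, ω s * Real.log (s / t) * s)
      ≤ ∫ s in Ioo t 1, ω s * Real.log (s / t) * s := by
    refine setIntegral_mono_set hfi ?_
      (HasSubset.Subset.eventuallyLE (Ioo_subset_Ioo hm.le le_rfl))
    refine (ae_restrict_iff' measurableSet_Ioo).mpr (ae_of_all _ fun s hs => ?_)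
    obtain ⟨hs1, hs2⟩ := hs
    have hω0 : 0 ≤ ω s := hω_nonneg s ⟨by linarith, by linarith⟩
    have hlog0 : 0 ≤ Real.log (s/t) := Real.log_nonneg (by rw [le_div_iff₀ ht0]; linarith)
    have : (0:ℝ) ≤ s := by linarith
    positivity
  have step2 : (∫ s in Ioo ((1+t)/2) 1, ((1-t)/4) * ω s)
      ≤ ∫ s in Ioo ((1+t)/2) 1, ω s * Real.log (s / t) * s := by
    refine setIntegral_mono_on
      ((hω_int.mono_set (Ioo_subset_Ioo (by linarith) le_rfl)).const_mul _)
      (hfi.mono_set (Ioo_subset_Ioo hm.le le_rfl)) measurableSet_Ioo (fun s hs => ?_)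
    obtain ⟨hs1, hs2⟩ := hs
    have hs0 : (0:ℝ) < s := by linarith
    have hω0 : 0 ≤ ω s := hω_nonneg s ⟨by linarith, by linarith⟩
    set L := Real.log (s/t) with hLdef
    have hts : t/s ≤ (1+t)/2 := by
      rw [div_le_iff₀ hs0]; nlinarith [sq_nonneg (1-t)]
    have hL : (1-t)/2 ≤ L := by
      have h5 := Real.one_sub_inv_le_log_of_pos (div_pos hs0 ht0)
      rw [inv_div] at h5
      linarith
    have key : (1-t)/4 ≤ L * s := by nlinarith
    nlinarith [mul_le_mul_of_nonneg_left key hω0]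
  rw [MeasureTheory.integral_const_mul] at step2
  linarith


lemma g2_int (hω_int : IntegrableOn ω (Ioo (0:ℝ) 1)) :
    IntegrableOn (fun s => ω s * s) (Ioo (0:ℝ) 1) := by
  refine Integrable.mono hω_int
    (hω_int.aestronglyMeasurable.mul measurable_id.aestronglyMeasurable) ?_
  refine (ae_restrict_iff' measurableSet_Ioo).mpr (ae_of_all _ fun s hs => ?_)
  obtain ⟨hs1, hs2⟩ := hs
  rw [Real.norm_eq_abs, Real.norm_eq_abs, abs_mul]
  exact mul_le_of_le_one_right (abs_nonneg _) (by rw [abs_of_nonneg hs1.le]; linarith)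

lemma g1_int (hω_int : IntegrableOn ω (Ioo (0:ℝ) 1)) :
    IntegrableOn (fun s => ω s * s * Real.log s) (Ioo (0:ℝ) 1) := by
  refine Integrable.mono hω_int
    ((hω_int.aestronglyMeasurable.mul measurable_id.aestronglyMeasurable).mul
      Real.measurable_log.aestronglyMeasurable) ?_
  refine (ae_restrict_iff' measurableSet_Ioo).mpr (ae_of_all _ fun s hs => ?_)
  obtain ⟨hs1, hs2⟩ := hs
  rw [Real.norm_eq_abs, Real.norm_eq_abs, abs_mul, abs_mul]
  have hlog : |Real.log s| = -Real.log s := by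
    rw [abs_of_nonpos (Real.log_nonpos hs1.le hs2.le)]
  have hkey : s * -Real.log s ≤ 1 - s := by
    have h5 := Real.one_sub_inv_le_log_of_pos hs1
    have h6 : s * (1 - s⁻¹) ≤ s * Real.log s := mul_le_mul_of_nonneg_left h5 hs1.le
    have h7 : s * (1 - s⁻¹) = s - 1 := by field_simp
    nlinarith
  have : |s| * |Real.log s| ≤ 1 := by
    rw [abs_of_nonneg hs1.le, hlog]; nlinarith
  nlinarith [abs_nonneg (ω s), abs_nonneg s, abs_nonneg (Real.log s),
    mul_le_mul_of_nonneg_left this (abs_nonneg (ω s))]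

lemma wstar_repr (hω_int : IntegrableOn ω (Ioo (0:ℝ) 1)) {t : ℝ} (h0 : 0 < t) (h1 : t < 1) :
    (∫ s in Ioo t 1, ω s * Real.log (s / t) * s)
      = (∫ s in Ioo t 1, ω s * s * Real.log s) - Real.log t * ∫ s in Ioo t 1, ω s * s := by
  have hsub : Ioo t 1 ⊆ Ioo (0:ℝ) 1 := Ioo_subset_Ioo h0.le le_rfl
  have h1i := (g1_int ω hω_int).mono_set hsub
  have h2i := (g2_int ω hω_int).mono_set hsub
  calc (∫ s in Ioo t 1, ω s * Real.log (s / t) * s)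
      = ∫ s in Ioo t 1, (ω s * s * Real.log s - Real.log t * (ω s * s)) := by
        refine setIntegral_congr_fun measurableSet_Ioo fun s hs => ?_
        rw [Real.log_div (ne_of_gt (lt_trans h0 hs.1)) h0.ne']
        ring
    _ = _ := by rw [integral_sub h1i (h2i.const_mul _), MeasureTheory.integral_const_mul]

lemma tail_eq (g : ℝ → ℝ) (hg : IntegrableOn g (Ioo (0:ℝ) 1)) {t : ℝ} (h0 : 0 < t) (h1 : t < 1) :
    (∫ s in Ioo t 1, g s)
      = (∫ s in Ioo (0:ℝ) 1, g s) - ∫ x in (0:ℝ)..t, (Ioo (0:ℝ) 1).indicator g x := by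
  have hu : Ioc 0 t ∪ Ioo t 1 = Ioo (0:ℝ) 1 := Set.Ioc_union_Ioo_eq_Ioo (le_of_lt h0) h1
  have hd : Disjoint (Ioc (0:ℝ) t) (Ioo t 1) :=
    Set.disjoint_left.mpr fun x hx hx' => absurd hx.2 (not_le.mpr hx'.1)
  have hsplit := MeasureTheory.setIntegral_union hd measurableSet_Ioo
    (hg.mono_set (by rw [← hu]; exact subset_union_left))
    (hg.mono_set (by rw [← hu]; exact subset_union_right))
  rw [hu] at hsplit
  have h2 : (∫ x in (0:ℝ)..t, (Ioo (0:ℝ) 1).indicator g x) = ∫ s in Ioc 0 t, g s := by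
    rw [intervalIntegral.integral_of_le h0.le]
    exact setIntegral_congr_fun measurableSet_Ioc fun s hs =>
      indicator_of_mem (Set.mem_Ioo.mpr ⟨hs.1, lt_of_le_of_lt hs.2 h1⟩) g
  rw [h2]
  linarith

lemma rpow_one_sub_integrable {p : ℝ} (hp : -1 < p) (r : ℝ) (hr : r ≤ 1) :
    IntegrableOn (fun t => (1-t)^p) (Ioo r 1) := by
  have _h1 : IntervalIntegrable (fun x : ℝ => x ^ p) volume (1-r) (1-1) :=
    intervalIntegral.intervalIntegrable_rpow' hp
  have h2 := _h1.comp_sub_left 1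
  simp only [sub_sub_cancel] at h2
  have h3 : IntegrableOn (fun x => (1-x)^p) (Ioo r 1) := by
    have := (intervalIntegrable_iff_integrableOn_Ioo_of_le hr).mp h2
    exact this
  exact h3

lemma integral_one_sub_rpow {p : ℝ} (hp : 0 < p) {a b : ℝ} (hab : a ≤ b) :
    (∫ t in Ioo a b, (1-t)^(p-1)) = ((1-a)^p - (1-b)^p)/p := by
  rw [← MeasureTheory.integral_Ioc_eq_integral_Ioo, ← intervalIntegral.integral_of_le hab,
      intervalIntegral.integral_comp_sub_left (fun x : ℝ => x ^ (p-1)) 1,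
      integral_rpow (Or.inl (by linarith))]
  have : p - 1 + 1 = p := by ring
  rw [this]


lemma outer_integrable (hω_int : IntegrableOn ω (Ioo (0:ℝ) 1))
    (hω_nonneg : ∀ r ∈ Set.Ico (0:ℝ) 1, 0 ≤ ω r)
    {r : ℝ} (hr : 1/2 ≤ r) (hr1 : r < 1) {α : ℝ} (hα : 0 < α) :
    IntegrableOn (fun t => (1-t)^(α-2) * ∫ s in Ioo t 1, ω s * Real.log (s / t) * s)
      (Ioo r 1) := by
  set G₁ := (Ioo (0:ℝ) 1).indicator (fun s => ω s * s * Real.log s) with hG₁def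
  set G₂ := (Ioo (0:ℝ) 1).indicator (fun s => ω s * s) with hG₂def
  have hG₁ : Integrable G₁ := (integrable_indicator_iff measurableSet_Ioo).mpr (g1_int ω hω_int)
  have hG₂ : Integrable G₂ := (integrable_indicator_iff measurableSet_Ioo).mpr (g2_int ω hω_int)
  set T₁ := ∫ s in Ioo (0:ℝ) 1, ω s * s * Real.log s with hT₁
  set T₂ := ∫ s in Ioo (0:ℝ) 1, ω s * s with hT₂
  set φ : ℝ → ℝ := fun t => (1-t)^(α-2) *
    ((T₁ - ∫ x in (0:ℝ)..t, G₁ x) - Real.log t * (T₂ - ∫ x in (0:ℝ)..t, G₂ x)) with hφ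
  have hcont : ContinuousOn φ (Ioo r 1) := by
    have c₁ : Continuous fun t : ℝ => ∫ x in (0:ℝ)..t, G₁ x :=
      intervalIntegral.continuous_primitive (fun a b => hG₁.intervalIntegrable) 0
    have c₂ : Continuous fun t : ℝ => ∫ x in (0:ℝ)..t, G₂ x :=
      intervalIntegral.continuous_primitive (fun a b => hG₂.intervalIntegrable) 0
    apply ContinuousOn.mul
    · refine ContinuousOn.rpow_const (continuous_const.sub continuous_id).continuousOn ?_
      intro t ht
      refine Or.inl (fun h => ?_)
      have h2 := sub_eq_zero.mp h
      have := ht.2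
      nlinarith
    · refine ContinuousOn.sub (continuous_const.sub c₁).continuousOn ?_
      refine ContinuousOn.mul (Real.continuousOn_log.mono ?_)
        (continuous_const.sub c₂).continuousOn
      intro t ht
      simp only [mem_compl_iff, mem_singleton_iff]
      have : (0:ℝ) < t := by linarith [ht.1]
      exact this.ne'
  have heq : EqOn φ
      (fun t => (1-t)^(α-2) * ∫ s in Ioo t 1, ω s * Real.log (s / t) * s) (Ioo r 1) := by
    intro t ht
    obtain ⟨ht1, ht2⟩ := ht
    have h0t : (0:ℝ) < t := by linarith
    simp only [hφ]
    rw [wstar_repr ω hω_int h0t ht2, tail_eq _ (g1_int ω hω_int) h0t ht2,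
      tail_eq _ (g2_int ω hω_int) h0t ht2]
  have hmeas : AEStronglyMeasurable
      (fun t => (1-t)^(α-2) * ∫ s in Ioo t 1, ω s * Real.log (s / t) * s)
      (volume.restrict (Ioo r 1)) := by
    refine (hcont.aestronglyMeasurable measurableSet_Ioo).congr ?_
    exact (ae_restrict_iff' measurableSet_Ioo).mpr (ae_of_all _ heq)
  refine Integrable.mono'
    ((rpow_one_sub_integrable (by linarith : (-1:ℝ) < α - 1) r hr1.le).const_mul
      (2 * ∫ s in Ioo r 1, ω s)) hmeas ?_
  refine (ae_restrict_iff' measurableSet_Ioo).mpr (ae_of_all _ fun t ht => ?_)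
  obtain ⟨ht1, ht2⟩ := ht
  have h1t : (0:ℝ) < 1 - t := by linarith
  have hws0 := wstar_nonneg_s8 ω hω_nonneg (t := t) (by linarith)
  have hwsle := wstar_le ω hω_int hω_nonneg (t := t) (by linarith) ht2
  have hmono := what_mono ω hω_int hω_nonneg (a := r) (b := t) (by linarith) ht1.le
  have hrp : (0:ℝ) ≤ (1-t)^(α-2) := Real.rpow_nonneg h1t.le _
  rw [Real.norm_eq_abs, abs_of_nonneg (mul_nonneg hrp hws0)]
  have key : (1-t)^(α-2) * (1-t) = (1-t)^(α-1) := by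
    rw [← Real.rpow_add_one h1t.ne']; ring_nf
  have b1 : (∫ s in Ioo t 1, ω s * Real.log (s / t) * s) ≤ 2*(1-t) * ∫ s in Ioo r 1, ω s :=
    hwsle.trans (by nlinarith)
  calc (1-t)^(α-2) * (∫ s in Ioo t 1, ω s * Real.log (s / t) * s)
      ≤ (1-t)^(α-2) * (2*(1-t) * ∫ s in Ioo r 1, ω s) := mul_le_mul_of_nonneg_left b1 hrp
    _ = (2 * ∫ s in Ioo r 1, ω s) * (1-t)^(α-1) := by rw [← key]; ring

end Aux

set_option maxHeartbeats 1000000 in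
/-- For `ω ∈ D̂` and `0 < α`, the weight `ω*_{α-2}(s) = (1-s)^{α-2} ω*(s)`
is regular on `[1/2, 1)`. -/
theorem stmt_8 (ω : ℝ → ℝ)
    (hω_nonneg : ∀ r ∈ Set.Ico (0:ℝ) 1, 0 ≤ ω r)
    (hω_int : IntegrableOn ω (Set.Ioo (0:ℝ) 1))
    (C : ℝ) (hC : 0 < C)
    (hdoubling : ∀ r ∈ Set.Ico (0:ℝ) 1,
      (∫ s in Set.Ioo r 1, ω s) ≤ C * ∫ s in Set.Ioo ((1 + r)/2) 1, ω s)
    (α : ℝ) (hα : 0 < α) :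
    ∃ c₁ > (0:ℝ), ∃ c₂ > (0:ℝ), ∀ r : ℝ, (1:ℝ)/2 ≤ r → r < 1 →
      c₁ * ((1 - r) ^ (α - 2) * ∫ s in Set.Ioo r 1, ω s * Real.log (s / r) * s) ≤
        (1 - r)⁻¹ * (∫ t in Set.Ioo r 1,
          (1 - t) ^ (α - 2) * ∫ s in Set.Ioo t 1, ω s * Real.log (s / t) * s) ∧
      (1 - r)⁻¹ * (∫ t in Set.Ioo r 1,
          (1 - t) ^ (α - 2) * ∫ s in Set.Ioo t 1, ω s * Real.log (s / t) * s) ≤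
        c₂ * ((1 - r) ^ (α - 2) * ∫ s in Set.Ioo r 1, ω s * Real.log (s / r) * s) := by
  have h2a : (2:ℝ)^(-α) < 1 := Real.rpow_lt_one_of_one_lt_of_neg one_lt_two (by linarith)
  have h2a0 : (0:ℝ) < (2:ℝ)^(-α) := Real.rpow_pos_of_pos (by norm_num) _
  set D : ℝ := (2:ℝ)^(-α) with hD
  refine ⟨(1 - D)/(8*C^2*α), div_pos (by linarith) (by positivity),
    8*C/α, by positivity, fun r hr hr1 => ?_⟩
  set m := (1+r)/2 with hm
  have hm1 : m < 1 := by rw [hm]; linarith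
  have hrm : r < m := by rw [hm]; linarith
  have h1r : (0:ℝ) < 1 - r := by linarith
  set W := ∫ s in Ioo r 1, ω s with hW
  set M := ∫ s in Ioo m 1, ω s with hM
  set M2 := ∫ s in Ioo ((1+m)/2) 1, ω s with hM2
  have hW0 : 0 ≤ W := what_nonneg ω hω_nonneg (by linarith)
  have hWm : W ≤ C * M := hdoubling r ⟨by linarith, hr1⟩
  have hMm : M ≤ C * M2 := hdoubling m ⟨by rw [hm]; linarith, hm1⟩
  have hM2W : W ≤ C^2 * M2 := by nlinarith [mul_le_mul_of_nonneg_left hMm hC.le, hWm]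
  set S := ∫ s in Ioo r 1, ω s * Real.log (s / r) * s with hS
  set I := ∫ t in Ioo r 1, (1-t)^(α-2) * ∫ s in Ioo t 1, ω s * Real.log (s / t) * s with hI
  have hIint := outer_integrable ω hω_int hω_nonneg hr hr1 hα
  have hrpint : IntegrableOn (fun t => (1-t)^(α-1)) (Ioo r 1) :=
    rpow_one_sub_integrable (by linarith) r hr1.le
  have hJ : (∫ t in Ioo r 1, (1-t)^(α-1)) = (1-r)^α/α := by
    have h := integral_one_sub_rpow hα hr1.le
    rw [h]
    norm_num [Real.zero_rpow hα.ne']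
  have hJ' : (∫ t in Ioo r m, (1-t)^(α-1)) = ((1-r)^α - ((1-r)/2)^α)/α := by
    rw [integral_one_sub_rpow hα hrm.le]
    have : 1 - m = (1-r)/2 := by rw [hm]; ring
    rw [this]
  -- rpow identities
  have e1 : (1-r)^(α-2) = (1-r)^(α-1) / (1-r) := by
    rw [eq_div_iff h1r.ne', ← Real.rpow_add_one h1r.ne']; ring_nf
  have e4 : (1-r)^α = (1-r)^(α-1) * (1-r) := by
    rw [← Real.rpow_add_one h1r.ne']; ring_nf
  have e3 : ((1-r)/2)^α = (1-r)^α * D := by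
    rw [hD, Real.div_rpow h1r.le (by norm_num), Real.rpow_neg (by norm_num)]
    ring
  -- Upper bound on I
  have hIub : I ≤ 2*W*((1-r)^α/α) := by
    have s1 : I ≤ ∫ t in Ioo r 1, (2*W) * (1-t)^(α-1) := by
      refine setIntegral_mono_on hIint (hrpint.const_mul _) measurableSet_Ioo fun t ht => ?_
      obtain ⟨ht1, ht2⟩ := ht
      have h1t : (0:ℝ) < 1 - t := by linarith
      have hrp : (0:ℝ) ≤ (1-t)^(α-2) := Real.rpow_nonneg h1t.le _
      have hwsle := wstar_le ω hω_int hω_nonneg (t := t) (by linarith) ht2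
      have hmono := what_mono ω hω_int hω_nonneg (a := r) (b := t) (by linarith) ht1.le
      have key : (1-t)^(α-2) * (1-t) = (1-t)^(α-1) := by
        rw [← Real.rpow_add_one h1t.ne']; ring_nf
      have b1 : (∫ s in Ioo t 1, ω s * Real.log (s / t) * s) ≤ 2*(1-t) * W :=
        hwsle.trans (mul_le_mul_of_nonneg_left hmono (by linarith : (0:ℝ) ≤ 2*(1-t)))
      calc (1-t)^(α-2) * (∫ s in Ioo t 1, ω s * Real.log (s / t) * s)
          ≤ (1-t)^(α-2) * (2*(1-t) * W) := mul_le_mul_of_nonneg_left b1 hrp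
        _ = (2*W) * (1-t)^(α-1) := by rw [← key]; ring
    rw [MeasureTheory.integral_const_mul, hJ] at s1
    linarith
  -- Lower bound on I
  have hIlb : (W/(4*C^2)) * (((1-r)^α - ((1-r)/2)^α)/α) ≤ I := by
    have s1 : (∫ t in Ioo r m, (W/(4*C^2)) * (1-t)^(α-1))
        ≤ ∫ t in Ioo r m, (1-t)^(α-2) * ∫ s in Ioo t 1, ω s * Real.log (s / t) * s := by
      refine setIntegral_mono_on
        ((hrpint.mono_set (Ioo_subset_Ioo le_rfl hm1.le)).const_mul _)
        (hIint.mono_set (Ioo_subset_Ioo le_rfl hm1.le)) measurableSet_Ioo fun t ht => ?_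
      obtain ⟨ht1, ht2⟩ := ht
      have h1t : (0:ℝ) < 1 - t := by linarith
      have hrp : (0:ℝ) ≤ (1-t)^(α-2) := Real.rpow_nonneg h1t.le _
      have hws := wstar_ge ω hω_int hω_nonneg (t := t) (by linarith) (by linarith)
      have hmono2 : M2 ≤ ∫ s in Ioo ((1+t)/2) 1, ω s := by
        refine what_mono ω hω_int hω_nonneg (a := (1+t)/2) (b := (1+m)/2) (by linarith) ?_
        rw [hm]; linarith
      have key : (1-t)^(α-2) * (1-t) = (1-t)^(α-1) := by
        rw [← Real.rpow_add_one h1t.ne']; ring_nf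
      have hWC : W/C^2 ≤ M2 := (div_le_iff₀ (by positivity)).mpr (by linarith [hM2W])
      have b2 : (1-t)/4 * (W/C^2) ≤ ∫ s in Ioo t 1, ω s * Real.log (s / t) * s := by
        refine le_trans ?_ hws
        apply mul_le_mul_of_nonneg_left (hWC.trans hmono2) (by linarith : (0:ℝ) ≤ (1-t)/4)
      calc (W/(4*C^2)) * (1-t)^(α-1)
          = (1-t)^(α-2) * ((1-t)/4 * (W/C^2)) := by rw [← key]; ring
        _ ≤ (1-t)^(α-2) * ∫ s in Ioo t 1, ω s * Real.log (s / t) * s :=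
            mul_le_mul_of_nonneg_left b2 hrp
    have s2 : (∫ t in Ioo r m, (1-t)^(α-2) * ∫ s in Ioo t 1, ω s * Real.log (s / t) * s)
        ≤ I := by
      refine setIntegral_mono_set hIint ?_
        (HasSubset.Subset.eventuallyLE (Ioo_subset_Ioo le_rfl hm1.le))
      refine (ae_restrict_iff' measurableSet_Ioo).mpr (ae_of_all _ fun t ht => ?_)
      exact mul_nonneg (Real.rpow_nonneg (by linarith [ht.2]) _)
        (wstar_nonneg_s8 ω hω_nonneg (by linarith [ht.1]))
    rw [MeasureTheory.integral_const_mul, hJ'] at s1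
    linarith
  -- wstar r bounds
  have hrp : (0:ℝ) ≤ (1-r)^(α-2) := Real.rpow_nonneg h1r.le _
  have hwr_ub : S ≤ 2*(1-r)*W := wstar_le ω hω_int hω_nonneg hr hr1
  have hwr_lb : (1-r)/4 * M ≤ S := wstar_ge ω hω_int hω_nonneg hr hr1
  constructor
  · calc (1 - D)/(8*C^2*α) * ((1-r)^(α-2) * S)
        ≤ (1 - D)/(8*C^2*α) * ((1-r)^(α-2) * (2*(1-r)*W)) := by
          refine mul_le_mul_of_nonneg_left (mul_le_mul_of_nonneg_left hwr_ub hrp) ?_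
          exact (div_pos (by linarith) (by positivity)).le
      _ = (1-r)⁻¹ * ((W/(4*C^2)) * (((1-r)^α - ((1-r)/2)^α)/α)) := by
          rw [e3, e4, e1]; field_simp; ring
      _ ≤ (1-r)⁻¹ * I := mul_le_mul_of_nonneg_left hIlb (inv_nonneg.mpr h1r.le)
  · calc (1-r)⁻¹ * I
        ≤ (1-r)⁻¹ * (2*W*((1-r)^α/α)) := mul_le_mul_of_nonneg_left hIub (inv_nonneg.mpr h1r.le)
      _ = (8*C/α) * ((1-r)^(α-2) * ((1-r)/4 * (W/C))) := by
          rw [e4, e1]; field_simp; ring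
      _ ≤ (8*C/α) * ((1-r)^(α-2) * S) := by
          refine mul_le_mul_of_nonneg_left (mul_le_mul_of_nonneg_left ?_ hrp) (by positivity)
          refine le_trans ?_ hwr_lb
          refine mul_le_mul_of_nonneg_left ?_ (by linarith : (0:ℝ) ≤ (1-r)/4)
          exact (div_le_iff₀ hC).mpr (by linarith [hWm])
end

section
/- Let ω be a radial weight in the class D̂. Then for every analytic self-map φ of the unit disc there exist constants M > 0 and r₀ ∈ (0,1) such that N_{φ,ω*}(z) ≤ M ω*(z) for all r₀ ≤ |z| < 1, where N_{φ,ω*}(z) = Σ_{ζ ∈ φ⁻¹(z)} ω*(ζ). -/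
open MeasureTheory Set Metric
open scoped Classical

/-!
Compose `φ` with the disc automorphism moving `z` to `0`: `h = (φ - z) / (1 - z̄ φ)` maps the disc
into itself, vanishes exactly on the fibre `φ⁻¹(z)` with the same multiplicities, and `|h(0)| = δ` is
the pseudo-hyperbolic distance between `φ(0)` and `z`. Jensen's formula gives
`∑ m(ζ) log (1/|ζ|) ≤ log (1/δ)`, so in particular `|ζ| ≥ δ` on the fibre; as
`ω*(r) ≤ log (1/r) ω̂(r)`, this yields `N_{φ,ω*}(z) ≤ ω̂(δ) log (1/δ)`. For `|z|` close to `1`,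
`δ ≥ ρ = (|z| - |φ(0)|) / (1 - |φ(0)| |z|)` with `1 - ρ ≲ 1 - |z|`, and the `D̂` condition
iterated a fixed number of times gives `(1 - ρ) ω̂(ρ) ≲ (1 - |z|) ω̂((1 + |z|)/2) ≲ ω*(|z|)`.
-/

open Filter Topology MeromorphicOn ComplexConjugate

lemma AnalyticOnNhd.divisor_apply_eq_analyticOrderNatAt {U : Set ℂ} {f : ℂ → ℂ}
    (hf : AnalyticOnNhd ℂ f U) {u : ℂ} (hu : u ∈ U) :
    divisor f U u = analyticOrderNatAt f u := by
  rw [hf.divisor_apply hu, analyticOrderNatAt]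
  cases analyticOrderAt f u <;> simp

lemma AnalyticOnNhd.sum_analyticOrderNatAt_mul_log_le_of_closedBall {f : ℂ → ℂ} {R : ℝ}
    (hR : 0 < R) (hf : AnalyticOnNhd ℂ f (closedBall 0 R))
    (hf_le : ∀ w ∈ sphere (0:ℂ) R, ‖f w‖ ≤ 1) (hf0 : f 0 ≠ 0)
    (F : Finset ℂ) (hF : ∀ u ∈ F, ‖u‖ ≤ R) :
    ∑ u ∈ F, analyticOrderNatAt f u * Real.log (R * ‖u‖⁻¹) ≤ Real.log ‖f 0‖⁻¹ := by
  rw [← abs_of_pos hR] at hf hf_le hF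
  set D := divisor f (closedBall 0 |R|)
  set g : ℂ → ℝ := fun u => D u * Real.log (R * ‖0 - u‖⁻¹)
  have hg_nonneg : ∀ u, 0 ≤ g u := by
    intro u
    by_cases hu : u ∈ closedBall (0:ℂ) |R|
    · rcases eq_or_ne u 0 with rfl | hu0
      · simp [g]
      rw [mem_closedBall_zero_iff, abs_of_pos hR] at hu
      refine mul_nonneg (by exact_mod_cast hf.divisor_nonneg u) (Real.log_nonneg ?_)
      rw [zero_sub, norm_neg, le_mul_inv_iff₀ (norm_pos_iff.2 hu0), one_mul]
      exact hu
    · simp [g, D, hu]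
  have hg_eq : ∀ u ∈ F, g u = analyticOrderNatAt f u * Real.log (R * ‖u‖⁻¹) := by
    intro u hu
    simp [g, D, hf.divisor_apply_eq_analyticOrderNatAt (mem_closedBall_zero_iff.2 (hF u hu))]
  have hfin := D.finiteSupport (isCompact_closedBall 0 |R|)
  have hsum : ∑ u ∈ F, g u ≤ ∑ᶠ u, g u := by
    rw [finsum_eq_sum_of_support_subset g (s := F ∪ hfin.toFinset) ?_]
    · exact Finset.sum_le_sum_of_subset_of_nonneg Finset.subset_union_left
        (fun u _ _ => hg_nonneg u)
    · intro u hu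
      simp only [Finset.coe_union, Finite.coe_toFinset]
      right
      intro hDu
      simp [g, hDu] at hu
  have hjensen := hf.circleAverage_log_norm hR.ne' hf0
  have havg : Real.circleAverage (Real.log ‖f ·‖) 0 R ≤ 0 := by
    apply Real.circleAverage_mono_on_of_le_circle
    · exact (hf.mono sphere_subset_closedBall).meromorphicOn.circleIntegrable_log_norm
    · exact fun w hw => Real.log_nonpos (norm_nonneg _) (hf_le w hw)
  rw [Real.log_inv, ← Finset.sum_congr rfl hg_eq]
  linarith

lemma AnalyticOnNhd.sum_analyticOrderNatAt_mul_log_le {f : ℂ → ℂ}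
    (hf : AnalyticOnNhd ℂ f (ball 0 1)) (hf_le : ∀ w ∈ ball (0:ℂ) 1, ‖f w‖ ≤ 1) (hf0 : f 0 ≠ 0)
    (F : Finset ℂ) (hF : ∀ u ∈ F, ‖u‖ < 1) :
    ∑ u ∈ F, analyticOrderNatAt f u * Real.log ‖u‖⁻¹ ≤ Real.log ‖f 0‖⁻¹ := by
  set A : ℝ := ∑ u ∈ F, (analyticOrderNatAt f u : ℝ)
  set B : ℝ := ∑ u ∈ F, analyticOrderNatAt f u * Real.log ‖u‖⁻¹
  have hsplit : ∀ R ≠ 0,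
      ∑ u ∈ F, analyticOrderNatAt f u * Real.log (R * ‖u‖⁻¹) = A * Real.log R + B := by
    intro R hR
    rw [Finset.sum_mul, ← Finset.sum_add_distrib]
    refine Finset.sum_congr rfl fun u _ => ?_
    rcases eq_or_ne u 0 with rfl | hu
    · simp [analyticOrderNatAt, (hf 0 (mem_ball_self one_pos)).analyticOrderAt_eq_zero.2 hf0]
    · rw [Real.log_mul hR (by simpa using hu)]
      ring
  have hev : ∀ᶠ R in 𝓝[<] (1:ℝ), A * Real.log R + B ≤ Real.log ‖f 0‖⁻¹ := by
    have hF' : ∀ᶠ R in 𝓝[<] (1:ℝ), ∀ u ∈ F, ‖u‖ < R :=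
      (Filter.eventually_all_finset F).2 fun u hu =>
        Filter.mem_of_superset (Ioo_mem_nhdsLT (hF u hu)) fun _ hR => hR.1
    filter_upwards [hF', Ioo_mem_nhdsLT one_pos] with R hFR hR
    rw [← hsplit R hR.1.ne']
    refine sum_analyticOrderNatAt_mul_log_le_of_closedBall hR.1
      (hf.mono (closedBall_subset_ball hR.2)) (fun w hw => hf_le w ?_) hf0 F
      (fun u hu => (hFR u hu).le)
    exact sphere_subset_ball hR.2 hw
  have hlim : Tendsto (fun R => A * Real.log R + B) (𝓝[<] 1) (𝓝 (A * Real.log 1 + B)) :=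
    (((Real.continuousAt_log one_ne_zero).tendsto.const_mul A).add_const B).mono_left
      nhdsWithin_le_nhds
  simpa using le_of_tendsto hlim hev

noncomputable def omegaHat (ω : ℝ → ℝ) (r : ℝ) : ℝ := ∫ s in Ioo r 1, ω s

section Weight

variable {ω : ℝ → ℝ} (hnn : ∀ r ∈ Ico (0:ℝ) 1, 0 ≤ ω r) (hint : IntegrableOn ω (Ioo (0:ℝ) 1))
include hnn

lemma omegaHat_nonneg {r : ℝ} (hr : 0 ≤ r) : 0 ≤ omegaHat ω r :=
  setIntegral_nonneg measurableSet_Ioo fun s hs => hnn s ⟨hr.trans hs.1.le, hs.2⟩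

include hint

lemma omegaHat_anti {r r' : ℝ} (hr : 0 ≤ r) (hrr' : r ≤ r') : omegaHat ω r' ≤ omegaHat ω r := by
  refine setIntegral_mono_set (hint.mono_set fun s hs => ⟨hr.trans_lt hs.1, hs.2⟩) ?_
    (Ioo_subset_Ioo_left hrr').eventuallyLE
  filter_upwards [ae_restrict_mem measurableSet_Ioo] with s hs
  exact hnn s ⟨hr.trans hs.1.le, hs.2⟩

lemma integrableOn_wstar_integrand {r : ℝ} (hr : 0 < r) :
    IntegrableOn (fun s => ω s * Real.log (s / r) * s) (Ioo r 1) := by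
  have hωr : IntegrableOn ω (Ioo r 1) := hint.mono_set fun s hs => ⟨hr.trans hs.1, hs.2⟩
  refine Integrable.mono' (hωr.mul_const (Real.log r⁻¹)) ?_ ?_
  · exact (hωr.aestronglyMeasurable.mul
      (Real.measurable_log.comp (measurable_id.div_const r)).aestronglyMeasurable).mul
      measurable_id.aestronglyMeasurable
  filter_upwards [ae_restrict_mem measurableSet_Ioo] with s hs
  have hs0 : 0 < s := hr.trans hs.1
  have hlog : 0 ≤ Real.log (s / r) := Real.log_nonneg ((one_le_div hr).2 hs.1.le)
  have hωs : 0 ≤ ω s := hnn s ⟨hs0.le, hs.2⟩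
  rw [Real.norm_eq_abs, abs_of_nonneg (by positivity)]
  calc ω s * Real.log (s / r) * s ≤ ω s * Real.log (s / r) := by
        nlinarith [mul_nonneg hωs hlog, hs.2]
    _ ≤ ω s * Real.log r⁻¹ := by
        gcongr
        rw [div_eq_mul_inv]
        nlinarith [inv_pos.2 hr, hs.2]

lemma wstar_le_log_inv_mul_omegaHat {r : ℝ} (hr : 0 < r) :
    wstar ω r ≤ Real.log r⁻¹ * omegaHat ω r := by
  have hωr : IntegrableOn ω (Ioo r 1) := hint.mono_set fun s hs => ⟨hr.trans hs.1, hs.2⟩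
  rw [omegaHat, ← integral_const_mul]
  refine setIntegral_mono_on (integrableOn_wstar_integrand hnn hint hr) (hωr.const_mul _)
    measurableSet_Ioo fun s hs => ?_
  have hs0 : 0 < s := hr.trans hs.1
  have hlog : 0 ≤ Real.log (s / r) := Real.log_nonneg ((one_le_div hr).2 hs.1.le)
  have hlog_le : Real.log (s / r) ≤ Real.log r⁻¹ := by
    gcongr
    rw [div_eq_mul_inv]
    nlinarith [inv_pos.2 hr, hs.2]
  have hωs : 0 ≤ ω s := hnn s ⟨hs0.le, hs.2⟩
  nlinarith [mul_nonneg hωs hlog, mul_le_mul_of_nonneg_left hlog_le hωs, hs.2]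

lemma one_sub_mul_omegaHat_le_two_mul_wstar {r : ℝ} (hr : 0 < r) (hr1 : r < 1) :
    (1 - r) * omegaHat ω ((1 + r) / 2) ≤ 2 * wstar ω r := by
  have hmid : r < (1 + r) / 2 := by linarith
  have hsub : Ioo ((1 + r) / 2) 1 ⊆ Ioo r 1 := Ioo_subset_Ioo_left hmid.le
  have hint_r := integrableOn_wstar_integrand hnn hint hr
  have hnn_r : ∀ s ∈ Ioo r 1, 0 ≤ ω s * Real.log (s / r) * s := fun s hs => by
    have := hnn s ⟨(hr.trans hs.1).le, hs.2⟩
    have := Real.log_nonneg ((one_le_div hr).2 hs.1.le)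
    have := hr.trans hs.1
    positivity
  -- `s log (s/r) ≥ s - r ≥ (1 - r)/2` there
  have hpointwise : ∀ s ∈ Ioo ((1 + r) / 2) 1,
      ω s * ((1 - r) / 2) ≤ ω s * Real.log (s / r) * s := fun s hs => by
    have hs0 : 0 < s := (hr.trans hmid).trans hs.1
    have hlog : 1 - r / s ≤ Real.log (s / r) := by
      simpa using Real.one_sub_inv_le_log_of_pos (div_pos hs0 hr)
    have hωs := hnn s ⟨hs0.le, hs.2⟩
    have : (1 - r) / 2 ≤ Real.log (s / r) * s := by
      have : (1 - r / s) * s = s - r := by field_simp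
      nlinarith [hs.1]
    nlinarith
  calc (1 - r) * omegaHat ω ((1 + r) / 2)
      = 2 * ∫ s in Ioo ((1 + r) / 2) 1, ω s * ((1 - r) / 2) := by
        rw [omegaHat, integral_mul_const]; ring
    _ ≤ 2 * ∫ s in Ioo ((1 + r) / 2) 1, ω s * Real.log (s / r) * s := by
        refine mul_le_mul_of_nonneg_left (setIntegral_mono_on ?_ (hint_r.mono_set hsub)
          measurableSet_Ioo hpointwise) zero_le_two
        exact (hint.mono_set fun s hs => ⟨by linarith [hs.1], hs.2⟩).mul_const _
    _ ≤ 2 * wstar ω r := by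
        refine mul_le_mul_of_nonneg_left (setIntegral_mono_set hint_r ?_ hsub.eventuallyLE)
          zero_le_two
        exact (ae_restrict_mem measurableSet_Ioo).mono hnn_r

lemma omegaHat_le_pow_mul_omegaHat {C : ℝ} (hC : 0 ≤ C)
    (hdoubling : ∀ r ∈ Ico (0:ℝ) 1, omegaHat ω r ≤ C * omegaHat ω ((1 + r) / 2))
    {r : ℝ} (hr : 0 ≤ r) (n : ℕ) :
    ∀ t ∈ Ico (0:ℝ) 1, 1 - t ≤ 2 ^ n * (1 - r) → omegaHat ω t ≤ C ^ n * omegaHat ω r := by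
  induction n with
  | zero =>
    intro t ht htr
    simpa using omegaHat_anti hnn hint hr (by linarith)
  | succ n ih =>
    intro t ht htr
    have hmid : (1 + t) / 2 ∈ Ico (0:ℝ) 1 := ⟨by linarith [ht.1], by linarith [ht.2]⟩
    calc omegaHat ω t ≤ C * omegaHat ω ((1 + t) / 2) := hdoubling t ht
      _ ≤ C * (C ^ n * omegaHat ω r) := by
          gcongr
          exact ih _ hmid (by rw [pow_succ] at htr; linarith)
      _ = C ^ (n + 1) * omegaHat ω r := by ring

lemma one_sub_mul_omegaHat_le_wstar {C : ℝ} (hC : 0 ≤ C)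
    (hdoubling : ∀ r ∈ Ico (0:ℝ) 1, omegaHat ω r ≤ C * omegaHat ω ((1 + r) / 2))
    {R ρ : ℝ} (hR : 0 < R) (hR1 : R < 1) (hρ : ρ ∈ Ico (0:ℝ) 1) (n : ℕ)
    (hρR : 1 - ρ ≤ 2 ^ n * (1 - R)) :
    (1 - ρ) * omegaHat ω ρ ≤ 2 ^ (n + 1) * C ^ (n + 1) * wstar ω R := by
  have h2R : 0 ≤ 2 ^ n * (1 - R) := mul_nonneg (by positivity) (sub_nonneg.2 hR1.le)
  calc (1 - ρ) * omegaHat ω ρ ≤ (2 ^ n * (1 - R)) * (C ^ n * omegaHat ω R) :=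
        mul_le_mul hρR (omegaHat_le_pow_mul_omegaHat hnn hint hC hdoubling hR.le n ρ hρ hρR)
          (omegaHat_nonneg hnn hρ.1) h2R
    _ ≤ (2 ^ n * (1 - R)) * (C ^ n * (C * omegaHat ω ((1 + R) / 2))) :=
        mul_le_mul_of_nonneg_left (mul_le_mul_of_nonneg_left (hdoubling R ⟨hR.le, hR1⟩)
          (pow_nonneg hC n)) h2R
    _ = 2 ^ n * C ^ (n + 1) * ((1 - R) * omegaHat ω ((1 + R) / 2)) := by ring
    _ ≤ 2 ^ n * C ^ (n + 1) * (2 * wstar ω R) :=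
        mul_le_mul_of_nonneg_left (one_sub_mul_omegaHat_le_two_mul_wstar hnn hint hR hR1)
          (by positivity)
    _ = 2 ^ (n + 1) * C ^ (n + 1) * wstar ω R := by ring

lemma omegaHat_mul_log_inv_le_of_le {ρ δ : ℝ} (hρ : 0 < ρ) (hρ1 : ρ < 1) (hρδ : ρ ≤ δ) :
    omegaHat ω δ * Real.log δ⁻¹ ≤ omegaHat ω ρ * Real.log ρ⁻¹ :=
  calc omegaHat ω δ * Real.log δ⁻¹ ≤ omegaHat ω δ * Real.log ρ⁻¹ :=
        mul_le_mul_of_nonneg_left (Real.log_le_log (inv_pos.2 (hρ.trans_le hρδ))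
          (inv_anti₀ hρ hρδ)) (omegaHat_nonneg hnn (hρ.trans_le hρδ).le)
    _ ≤ omegaHat ω ρ * Real.log ρ⁻¹ :=
        mul_le_mul_of_nonneg_right (omegaHat_anti hnn hint hρ.le hρδ)
          (Real.log_nonneg ((one_le_inv₀ hρ).2 hρ1.le))

end Weight

lemma norm_one_sub_conj_mul_sq (u v : ℂ) :
    ‖1 - conj v * u‖ ^ 2 = ‖u - v‖ ^ 2 + (1 - ‖u‖ ^ 2) * (1 - ‖v‖ ^ 2) := by
  simp only [Complex.sq_norm, Complex.normSq_apply, Complex.sub_re, Complex.sub_im,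
    Complex.mul_re, Complex.mul_im, Complex.one_re, Complex.one_im, Complex.conj_re,
    Complex.conj_im]
  ring

lemma norm_sub_lt_norm_one_sub_conj_mul_s10 {u v : ℂ} (hu : ‖u‖ < 1) (hv : ‖v‖ < 1) :
    ‖u - v‖ < ‖1 - conj v * u‖ := by
  have hP : 0 < (1 - ‖u‖ ^ 2) * (1 - ‖v‖ ^ 2) :=
    mul_pos (by nlinarith [norm_nonneg u]) (by nlinarith [norm_nonneg v])
  have := norm_one_sub_conj_mul_sq u v
  exact lt_of_pow_lt_pow_left₀ 2 (norm_nonneg _) (by linarith)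

/-- The pseudo-hyperbolic distance between `u` and `v` is at least that between `‖u‖` and `‖v‖`. -/
lemma abs_norm_sub_norm_div_le_norm_div {u v : ℂ} (hu : ‖u‖ < 1) (hv : ‖v‖ < 1) :
    |‖u‖ - ‖v‖| / (1 - ‖u‖ * ‖v‖) ≤ ‖(u - v) / (1 - conj v * u)‖ := by
  have hD := norm_sub_lt_norm_one_sub_conj_mul_s10 hu hv
  have hE : |‖u‖ - ‖v‖| ≤ ‖u - v‖ := abs_norm_sub_norm_le u v
  have hpq : 0 < 1 - ‖u‖ * ‖v‖ := by nlinarith [norm_nonneg u, norm_nonneg v]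
  have hP : 0 ≤ (1 - ‖u‖ ^ 2) * (1 - ‖v‖ ^ 2) :=
    mul_nonneg (by nlinarith [norm_nonneg u]) (by nlinarith [norm_nonneg v])
  have hsq := norm_one_sub_conj_mul_sq u v
  rw [norm_div, div_le_div_iff₀ hpq ((norm_nonneg _).trans_lt hD)]
  -- squaring, the claim reduces to `hE` because `(1 - pq)² - (p - q)² = (1 - p²)(1 - q²)`
  refine (pow_le_pow_iff_left₀ (by positivity) (by positivity) two_ne_zero).1 ?_
  rw [mul_pow, mul_pow, sq_abs, hsq]
  have hE2 : (‖u‖ - ‖v‖) ^ 2 ≤ ‖u - v‖ ^ 2 := by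
    rw [← sq_abs]; exact pow_le_pow_left₀ (abs_nonneg _) hE 2
  nlinarith [mul_le_mul_of_nonneg_right hE2 hP]

lemma norm_sub_div_one_sub_conj_mul_pos {u v : ℂ} (hu : ‖u‖ < 1) (hv : ‖v‖ < 1) (huv : u ≠ v) :
    0 < ‖(u - v) / (1 - conj v * u)‖ :=
  norm_pos_iff.2 <| div_ne_zero (sub_ne_zero.2 huv)
    (norm_pos_iff.1 ((norm_nonneg _).trans_lt (norm_sub_lt_norm_one_sub_conj_mul_s10 hu hv)))

lemma multOf_eq_analyticOrderNatAt (φ : ℂ → ℂ) (z ζ : ℂ) :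
    multOf φ z ζ = analyticOrderNatAt (fun w => φ w - z) ζ := by
  unfold multOf analyticOrderNatAt
  split_ifs with h
  · rfl
  · simp [h]

lemma AnalyticAt.analyticOrderNatAt_div_of_ne_zero {𝕜 : Type*} [NontriviallyNormedField 𝕜]
    {f g : 𝕜 → 𝕜} {x : 𝕜} (hf : AnalyticAt 𝕜 f x) (hg : AnalyticAt 𝕜 g x) (hgx : g x ≠ 0) :
    analyticOrderNatAt (fun w => f w / g w) x = analyticOrderNatAt f x := by
  have hginv : AnalyticAt 𝕜 g⁻¹ x := hg.inv hgx
  have hord : analyticOrderAt g⁻¹ x = 0 := hginv.analyticOrderAt_eq_zero.2 (by simpa using hgx)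
  have : (fun w => f w / g w) = f * g⁻¹ := by ext w; simp [div_eq_mul_inv]
  rw [this, analyticOrderNatAt, analyticOrderAt_mul hf hginv, hord, add_zero, analyticOrderNatAt]

section Counting

variable {φ : ℂ → ℂ} (hφ : DifferentiableOn ℂ φ (ball 0 1))
  (hmaps : MapsTo φ (ball 0 1) (ball 0 1)) {z : ℂ} (hz : z ∈ ball (0:ℂ) 1) (hz0 : z ≠ φ 0)
include hφ hmaps hz hz0

/-- Jensen's inequality for `(φ - z) / (1 - z̄ φ)`, whose zeros are the preimages of `z`. -/
lemma sum_multOf_mul_log_le (F : Finset ℂ) (hF : ∀ u ∈ F, ‖u‖ < 1) :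
    ∑ u ∈ F, multOf φ z u * Real.log ‖u‖⁻¹ ≤
      Real.log ‖(φ 0 - z) / (1 - conj z * φ 0)‖⁻¹ := by
  rw [mem_ball_zero_iff] at hz
  have hφa : AnalyticOnNhd ℂ φ (ball 0 1) := hφ.analyticOnNhd isOpen_ball
  have hlt : ∀ w ∈ ball (0:ℂ) 1, ‖φ w - z‖ < ‖1 - conj z * φ w‖ := fun w hw =>
    norm_sub_lt_norm_one_sub_conj_mul_s10 (mem_ball_zero_iff.1 (hmaps hw)) hz
  have hden : ∀ w ∈ ball (0:ℂ) 1, 1 - conj z * φ w ≠ 0 := fun w hw =>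
    norm_pos_iff.1 ((norm_nonneg _).trans_lt (hlt w hw))
  have hnum : ∀ w ∈ ball (0:ℂ) 1, AnalyticAt ℂ (fun w => φ w - z) w := fun w hw =>
    (hφa w hw).sub analyticAt_const
  have hdenA : ∀ w ∈ ball (0:ℂ) 1, AnalyticAt ℂ (fun w => 1 - conj z * φ w) w := fun w hw =>
    analyticAt_const.sub (analyticAt_const.mul (hφa w hw))
  have h0 : (0:ℂ) ∈ ball (0:ℂ) 1 := mem_ball_self one_pos
  have hjensen := AnalyticOnNhd.sum_analyticOrderNatAt_mul_log_le
    (f := fun w => (φ w - z) / (1 - conj z * φ w))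
    (fun w hw => (hnum w hw).div (hdenA w hw) (hden w hw))
    (fun w hw => by rw [norm_div, div_le_one₀ (norm_pos_iff.2 (hden w hw))]; exact (hlt w hw).le)
    (div_ne_zero (sub_ne_zero.2 hz0.symm) (hden 0 h0)) F hF
  refine le_of_eq_of_le (Finset.sum_congr rfl fun u hu => ?_) hjensen
  have hu : u ∈ ball (0:ℂ) 1 := mem_ball_zero_iff.2 (hF u hu)
  rw [multOf_eq_analyticOrderNatAt,
    (hnum u hu).analyticOrderNatAt_div_of_ne_zero (hdenA u hu) (hden u hu)]

theorem nev_le_omegaHat_mul_log {ω : ℝ → ℝ} (hnn : ∀ r ∈ Ico (0:ℝ) 1, 0 ≤ ω r)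
    (hint : IntegrableOn ω (Ioo (0:ℝ) 1)) :
    nev ω φ z ≤ omegaHat ω ‖(φ 0 - z) / (1 - conj z * φ 0)‖ *
      Real.log ‖(φ 0 - z) / (1 - conj z * φ 0)‖⁻¹ := by
  set δ := ‖(φ 0 - z) / (1 - conj z * φ 0)‖
  have hδ : 0 < δ := norm_sub_div_one_sub_conj_mul_pos
    (mem_ball_zero_iff.1 (hmaps (mem_ball_self one_pos))) (mem_ball_zero_iff.1 hz) hz0.symm
  have hterm : ∀ ζ : ↥(ball (0:ℂ) 1 ∩ φ ⁻¹' {z}), (multOf φ z ζ : ℝ) * wstar ω ‖(ζ : ℂ)‖ ≤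
      omegaHat ω δ * (multOf φ z ζ * Real.log ‖(ζ : ℂ)‖⁻¹) := by
    rintro ⟨ζ, hζ, hφζ⟩
    rw [mem_ball_zero_iff] at hζ
    rcases eq_or_ne (multOf φ z ζ) 0 with hm | hm
    · simp [hm]
    have hζ0 : 0 < ‖ζ‖ := norm_pos_iff.2 fun h => hz0 (by rw [← hφζ, h])
    have hlogζ : 0 ≤ Real.log ‖ζ‖⁻¹ := Real.log_nonneg ((one_le_inv₀ hζ0).2 hζ.le)
    have hsingle := sum_multOf_mul_log_le hφ hmaps hz hz0 {ζ} (by simpa using hζ)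
    rw [Finset.sum_singleton] at hsingle
    have hlog : Real.log ‖ζ‖⁻¹ ≤ Real.log δ⁻¹ :=
      (le_mul_of_one_le_left hlogζ (by exact_mod_cast Nat.one_le_iff_ne_zero.2 hm)).trans hsingle
    have hδζ : δ ≤ ‖ζ‖ := by
      rwa [Real.log_le_log_iff (inv_pos.2 hζ0) (inv_pos.2 hδ), inv_le_inv₀ hζ0 hδ] at hlog
    calc (multOf φ z ζ : ℝ) * wstar ω ‖ζ‖
        ≤ multOf φ z ζ * (Real.log ‖ζ‖⁻¹ * omegaHat ω ‖ζ‖) := by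
          gcongr; exact wstar_le_log_inv_mul_omegaHat hnn hint hζ0
      _ ≤ multOf φ z ζ * (Real.log ‖ζ‖⁻¹ * omegaHat ω δ) := by
          gcongr; exact omegaHat_anti hnn hint hδ.le hδζ
      _ = omegaHat ω δ * (multOf φ z ζ * Real.log ‖ζ‖⁻¹) := by ring
  have hsum : ∀ F : Finset ↥(ball (0:ℂ) 1 ∩ φ ⁻¹' {z}),
      ∑ ζ ∈ F, (multOf φ z ζ : ℝ) * wstar ω ‖(ζ : ℂ)‖ ≤ omegaHat ω δ * Real.log δ⁻¹ := by
    intro F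
    calc ∑ ζ ∈ F, (multOf φ z ζ : ℝ) * wstar ω ‖(ζ : ℂ)‖
        ≤ omegaHat ω δ * ∑ u ∈ F.map (Function.Embedding.subtype _),
            multOf φ z u * Real.log ‖u‖⁻¹ := by
          rw [Finset.sum_map, Finset.mul_sum]
          exact Finset.sum_le_sum fun ζ _ => hterm ζ
      _ ≤ omegaHat ω δ * Real.log δ⁻¹ := by
          refine mul_le_mul_of_nonneg_left (sum_multOf_mul_log_le hφ hmaps hz hz0 _ ?_)
            (omegaHat_nonneg hnn hδ.le)
          simp only [Finset.mem_map, Function.Embedding.coe_subtype]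
          rintro _ ⟨ζ, -, rfl⟩
          exact mem_ball_zero_iff.1 ζ.2.1
  exact tsum_le_of_sum_le' (by simpa using hsum ∅) hsum

end Counting

lemma sub_div_one_sub_mul_bounds {α R : ℝ} (hα0 : 0 ≤ α)
    (hR : (1 + 2 * α) / (2 + α) ≤ R) (hR1 : R < 1) :
    α < R ∧ (R - α) / (1 - α * R) ∈ Ico (1 / 2) 1 ∧
      1 - (R - α) / (1 - α * R) ≤ 2 / (1 - α) * (1 - R) := by
  rw [div_le_iff₀ (by linarith)] at hR
  have hαR : α < R := by nlinarith
  have hden : 0 < 1 - α * R := by nlinarith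
  refine ⟨hαR, ⟨?_, ?_⟩, ?_⟩
  · rw [le_div_iff₀ hden]; linarith
  · rw [div_lt_one hden]; nlinarith
  · rw [one_sub_div hden.ne', div_mul_eq_mul_div,
      div_le_div_iff₀ hden (by linarith)]
    have h1R : 0 ≤ 1 - R := by linarith
    nlinarith [mul_nonneg h1R (mul_nonneg hα0 h1R), mul_nonneg h1R (sq_nonneg (1 - α))]

lemma Real.log_inv_le_two_mul_one_sub {ρ : ℝ} (hρ : 1 / 2 ≤ ρ) (hρ1 : ρ ≤ 1) :
    Real.log ρ⁻¹ ≤ 2 * (1 - ρ) := by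
  have hρ0 : 0 < ρ := by linarith
  refine (Real.log_le_sub_one_of_pos (inv_pos.2 hρ0)).trans ?_
  rw [inv_eq_one_div, div_sub_one hρ0.ne', div_le_iff₀ hρ0]
  nlinarith

/-- If `ω ∈ D̂`, then for every analytic self-map `φ` of the disc there
are `M > 0` and `r₀ ∈ (0,1)` with `N_{φ,ω*}(z) ≤ M ω*(|z|)` for `r₀ ≤ |z| < 1`. -/
theorem stmt_10 (ω : ℝ → ℝ)
    (hω_nonneg : ∀ r ∈ Set.Ico (0:ℝ) 1, 0 ≤ ω r)
    (hω_int : IntegrableOn ω (Set.Ioo (0:ℝ) 1))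
    (C : ℝ) (hC : 0 < C)
    (hdoubling : ∀ r ∈ Set.Ico (0:ℝ) 1,
      (∫ s in Set.Ioo r 1, ω s) ≤ C * ∫ s in Set.Ioo ((1 + r)/2) 1, ω s)
    (φ : ℂ → ℂ) (hφ : DifferentiableOn ℂ φ (Metric.ball 0 1))
    (hmaps : Set.MapsTo φ (Metric.ball 0 1) (Metric.ball 0 1)) :
    ∃ M > (0:ℝ), ∃ r₀ ∈ Set.Ioo (0:ℝ) 1, ∀ z ∈ Metric.ball (0:ℂ) 1,
      r₀ ≤ ‖z‖ → z ≠ φ 0 → nev ω φ z ≤ M * wstar ω ‖z‖ := by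
  set α := ‖φ 0‖
  have hα1 : α < 1 := mem_ball_zero_iff.1 (hmaps (mem_ball_self one_pos))
  obtain ⟨n, hn⟩ := pow_unbounded_of_one_lt (2 / (1 - α)) one_lt_two
  refine ⟨2 ^ (n + 2) * C ^ (n + 1), by positivity, (1 + 2 * α) / (2 + α),
    ⟨by positivity, by rw [div_lt_one (by positivity)]; linarith⟩, fun z hz hRz hz0 => ?_⟩
  have hR1 : ‖z‖ < 1 := mem_ball_zero_iff.1 hz
  obtain ⟨hαR, hρ, hρR⟩ := sub_div_one_sub_mul_bounds (norm_nonneg _) hRz hR1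
  set ρ := (‖z‖ - α) / (1 - α * ‖z‖)
  set δ := ‖(φ 0 - z) / (1 - conj z * φ 0)‖
  have hρ0 : 0 < ρ := by linarith [hρ.1]
  have hρδ : ρ ≤ δ := by
    have := abs_norm_sub_norm_div_le_norm_div hα1 hR1
    rwa [abs_of_neg (sub_neg.2 hαR), neg_sub] at this
  calc nev ω φ z ≤ omegaHat ω δ * Real.log δ⁻¹ :=
        nev_le_omegaHat_mul_log hφ hmaps hz hz0 hω_nonneg hω_int
    _ ≤ omegaHat ω ρ * Real.log ρ⁻¹ :=
        omegaHat_mul_log_inv_le_of_le hω_nonneg hω_int hρ0 hρ.2 hρδ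
    _ ≤ omegaHat ω ρ * (2 * (1 - ρ)) :=
        mul_le_mul_of_nonneg_left (Real.log_inv_le_two_mul_one_sub hρ.1 hρ.2.le)
          (omegaHat_nonneg hω_nonneg hρ0.le)
    _ = 2 * ((1 - ρ) * omegaHat ω ρ) := by ring
    _ ≤ 2 * (2 ^ (n + 1) * C ^ (n + 1) * wstar ω ‖z‖) := by
        refine mul_le_mul_of_nonneg_left ?_ zero_le_two
        exact one_sub_mul_omegaHat_le_wstar hω_nonneg hω_int hC.le hdoubling
          ((norm_nonneg _).trans_lt hαR) hR1 ⟨hρ0.le, hρ.2⟩ n (hρR.trans (by gcongr))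
    _ = 2 ^ (n + 2) * C ^ (n + 1) * wstar ω ‖z‖ := by ring
end

section
/- Let 0 < t < 1 and let Li denote Littlewood's inequality: if φ is analytic self-map of D with φ(0) = a, then for z ≠ a, the product of the moduli of all preimages (with multiplicity) satisfies Π_n |ζ_n| ≥ |φ_z(a)|, where φ_z(u) = (z-u)/(1-conj(z)u). Deduce: for any nonincreasing function ψ: (0,1] → [0,∞) extended by ψ = 0 at modulus 1, Σ_n ψ(|ζ_n|) ≥ ψ(Π_n |ζ_n|) fails in general, but Σ_n ψ(|ζ_n|) ≤ ψ(Π_n |ζ_n|) holds when ψ(r) = ω*(r) is of the form ∫_r^1 ω(s) log(s/r) s ds for a radial weight ω. In particular Σ_n ω*(ζ_n) ≤ ω*(Π_n |ζ_n|). -/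
/-!
With `log⁺ x = max 0 (log x)`, `ω*(r) = ∫_0^1 ω(t) log⁺(t / r) t dt`, so it suffices to prove
`Σ log⁺(t / rᵢ) ≤ log⁺(t / Π rᵢ)` pointwise for `0 < t ≤ 1`. In terms of `a = log t ≤ 0` and
`bᵢ = -log rᵢ ≥ 0` this is `Σ (a + bᵢ)⁺ ≤ (a + Σ bᵢ)⁺`, the superadditivity of `b ↦ (a + b)⁺`
on `[0, ∞)`.
-/

open MeasureTheory Set Real

theorem Real.posLog_div_add_posLog_div_le_posLog_div_mul {t x y : ℝ} (ht₀ : 0 < t) (ht₁ : t ≤ 1)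
    (hx : x ∈ Ioc 0 1) (hy : y ∈ Ioc 0 1) :
    log⁺ (t / x) + log⁺ (t / y) ≤ log⁺ (t / (x * y)) := by
  have hlt : log t ≤ 0 := log_nonpos ht₀.le ht₁
  simp only [posLog_apply, log_div ht₀.ne' hx.1.ne', log_div ht₀.ne' hy.1.ne',
    log_div ht₀.ne' (mul_pos hx.1 hy.1).ne', log_mul hx.1.ne' hy.1.ne']
  rcases le_total 0 (log t - log x) with h₁ | h₁ <;>
    rcases le_total 0 (log t - log y) with h₂ | h₂ <;>
    simp only [max_eq_left, max_eq_right, h₁, h₂] <;>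
    first
    | exact le_max_of_le_right (by linarith [log_nonpos hx.1.le hx.2, log_nonpos hy.1.le hy.2])
    | simp

theorem Finset.prod_mem_Ioc_zero_one {ι : Type*} {s : Finset ι} {r : ι → ℝ}
    (hr : ∀ i ∈ s, r i ∈ Set.Ioc 0 1) : ∏ i ∈ s, r i ∈ Set.Ioc 0 1 :=
  ⟨Finset.prod_pos fun i hi => (hr i hi).1,
    Finset.prod_le_one (fun i hi => (hr i hi).1.le) fun i hi => (hr i hi).2⟩

theorem Real.sum_posLog_div_le_posLog_div_prod {ι : Type*} {t : ℝ} (ht₀ : 0 < t) (ht₁ : t ≤ 1)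
    (s : Finset ι) {r : ι → ℝ} (hr : ∀ i ∈ s, r i ∈ Ioc 0 1) :
    ∑ i ∈ s, log⁺ (t / r i) ≤ log⁺ (t / ∏ i ∈ s, r i) := by
  classical
  induction s using Finset.induction_on with
  | empty => simp [(posLog_eq_zero_iff t).2 (by rwa [abs_of_pos ht₀])]
  | insert j s hj ih =>
    rw [Finset.sum_insert hj, Finset.prod_insert hj]
    have hs : ∀ i ∈ s, r i ∈ Ioc 0 1 := fun i hi => hr i (Finset.mem_insert_of_mem hi)
    calc log⁺ (t / r j) + ∑ i ∈ s, log⁺ (t / r i)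
        ≤ log⁺ (t / r j) + log⁺ (t / ∏ i ∈ s, r i) := by gcongr; exact ih hs
      _ ≤ log⁺ (t / (r j * ∏ i ∈ s, r i)) :=
        posLog_div_add_posLog_div_le_posLog_div_mul ht₀ ht₁ (hr j (Finset.mem_insert_self j s))
          (Finset.prod_mem_Ioc_zero_one hs)

theorem setIntegral_Ioo_log_div_eq_setIntegral_posLog_div (f : ℝ → ℝ) {r : ℝ} (hr : 0 < r)
    (b : ℝ) :
    ∫ t in Ioo r b, f t * log (t / r) * t = ∫ t in Ioo 0 b, f t * log⁺ (t / r) * t := by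
  have hindicator : EqOn (fun t => f t * log⁺ (t / r) * t)
      ((Ioo r b).indicator fun t => f t * log (t / r) * t) (Ioo 0 b) := by
    intro t ht
    by_cases htr : r < t
    · have : 1 ≤ |t / r| := by rw [abs_of_pos (div_pos ht.1 hr)]; exact (one_le_div hr).2 htr.le
      simp [indicator_of_mem (show t ∈ Ioo r b from ⟨htr, ht.2⟩), posLog_eq_log this]
    · have : |t / r| ≤ 1 := by
        rw [abs_of_pos (div_pos ht.1 hr)]; exact (div_le_one hr).2 (not_lt.1 htr)
      simp [indicator_of_notMem fun h : t ∈ Ioo r b => htr h.1, (posLog_eq_zero_iff _).2 this]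
  rw [setIntegral_congr_fun measurableSet_Ioo hindicator, setIntegral_indicator measurableSet_Ioo,
    Ioo_inter_Ioo, max_eq_right hr.le, min_self]

theorem MeasureTheory.IntegrableOn.mul_posLog_div_mul {ω : ℝ → ℝ}
    (hω : IntegrableOn ω (Ioo 0 1)) (r : ℝ) :
    IntegrableOn (fun t => ω t * log⁺ (t / r) * t) (Ioo 0 1) := by
  simp_rw [mul_assoc]
  refine hω.mul_bdd (c := log⁺ r⁻¹) (by fun_prop) ?_
  filter_upwards [ae_restrict_mem measurableSet_Ioo] with t ht
  have hdiv : |t / r| ≤ |r⁻¹| := by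
    rw [div_eq_mul_inv, abs_mul, abs_of_pos ht.1]
    exact mul_le_of_le_one_left (abs_nonneg _) ht.2.le
  calc ‖log⁺ (t / r) * t‖ = log⁺ (t / r) * t := by
        rw [Real.norm_of_nonneg (mul_nonneg posLog_nonneg ht.1.le)]
    _ ≤ log⁺ (t / r) := mul_le_of_le_one_right posLog_nonneg ht.2.le
    _ ≤ log⁺ r⁻¹ := by
      rw [← posLog_abs, ← posLog_abs r⁻¹]
      exact posLog_le_posLog (abs_nonneg _) hdiv

/-- Superadditivity of `ω*`: for any finite collection `r_i ∈ (0,1]`,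
`Σ_i ω*(r_i) ≤ ω*(Π_i r_i)`. In particular `Σ_n ω*(ζ_n) ≤ ω*(Π_n |ζ_n|)` for the
preimages in Littlewood's inequality. -/
theorem stmt_16 (ω : ℝ → ℝ)
    (hω_nonneg : ∀ r ∈ Set.Ico (0:ℝ) 1, 0 ≤ ω r)
    (hω_int : IntegrableOn ω (Set.Ioo (0:ℝ) 1))
    {ι : Type*} (s : Finset ι) (r : ι → ℝ) (hr : ∀ i ∈ s, r i ∈ Set.Ioc (0:ℝ) 1) :
    ∑ i ∈ s, (∫ t in Set.Ioo (r i) 1, ω t * Real.log (t / r i) * t) ≤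
      ∫ t in Set.Ioo (∏ i ∈ s, r i) 1, ω t * Real.log (t / ∏ i ∈ s, r i) * t := by
  have hp := Finset.prod_mem_Ioc_zero_one hr
  rw [Finset.sum_congr rfl fun i hi =>
      setIntegral_Ioo_log_div_eq_setIntegral_posLog_div ω (hr i hi).1 1,
    setIntegral_Ioo_log_div_eq_setIntegral_posLog_div ω hp.1 1,
    ← integral_finsetSum s fun i _ => hω_int.mul_posLog_div_mul (r i)]
  refine setIntegral_mono_on (integrable_finsetSum s fun i _ => hω_int.mul_posLog_div_mul (r i))
    (hω_int.mul_posLog_div_mul _) measurableSet_Ioo fun t ht => ?_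
  rw [← Finset.sum_mul, ← Finset.mul_sum]
  have hωt : 0 ≤ ω t := hω_nonneg t ⟨ht.1.le, ht.2⟩
  gcongr
  · exact ht.1.le
  · exact sum_posLog_div_le_posLog_div_prod ht.1 ht.2.le s hr
end
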